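/- arXiv:1703.03627 — 15 statements merged into one kernel-verified Lean document; each statement's English description precedes it below -/
import Mathlib

section
/- Let r ≥ 0 and let a_0, a_1, …, a_r be positive integers. Then the inequality 1/a_0 + 1/a_1 + … + 1/a_r > r − 1 holds (as rational numbers) if and only if (a_0, …, a_r) is a platonic tuple. -/
/-- A platonic triple: a decreasingly ordered triple of positive integers of one of the
forms `(5,3,2)`, `(4,3,2)`, `(3,3,2)`, `(x,2,2)` with `x ≥ 2`, or `(x,y,1)` with
`x ≥ y ≥ 1`. -/
def IsPlatonicTriple (x y z : ℕ) : Prop :=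
  (x = 5 ∧ y = 3 ∧ z = 2) ∨ (x = 4 ∧ y = 3 ∧ z = 2) ∨ (x = 3 ∧ y = 3 ∧ z = 2) ∨
    (2 ≤ x ∧ y = 2 ∧ z = 2) ∨ (y ≤ x ∧ 1 ≤ y ∧ z = 1)

/-- Positive integers `a_0, …, a_{n-1}` form a platonic tuple if, after reordering them
decreasingly, the first three numbers form a platonic triple (padding with `1`'s if the
tuple has fewer than three entries) and all remaining entries equal `1`. -/
def IsPlatonicTuple {n : ℕ} (a : Fin n → ℕ) : Prop :=
  ∃ σ : Equiv.Perm (Fin n),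
    (∀ i j : Fin n, i ≤ j → a (σ j) ≤ a (σ i)) ∧
    IsPlatonicTriple
      (if h : 0 < n then a (σ ⟨0, h⟩) else 1)
      (if h : 1 < n then a (σ ⟨1, h⟩) else 1)
      (if h : 2 < n then a (σ ⟨2, h⟩) else 1) ∧
    (∀ k : Fin n, 3 ≤ (k : ℕ) → a (σ k) = 1)

lemma triple_char {x y z : ℕ} (hz : 0 < z) (hxy : y ≤ x) (hyz : z ≤ y) :
    ((1 : ℚ) < 1/x + 1/y + 1/z) ↔ IsPlatonicTriple x y z := by
  have hy : 0 < y := hz.trans_le hyz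
  have hx : 0 < x := hy.trans_le hxy
  have hxQ : (0:ℚ) < x := by exact_mod_cast hx
  have hyQ : (0:ℚ) < y := by exact_mod_cast hy
  have hzQ : (0:ℚ) < z := by exact_mod_cast hz
  constructor
  · intro h
    rcases Nat.lt_or_ge z 2 with hz2 | hz2
    · right; right; right; right
      exact ⟨hxy, hyz.trans' (by omega), by omega⟩
    · have hz3 : z = 2 := by
        by_contra hne
        have h3 : 3 ≤ z := by omega
        have l1 : (1:ℚ)/x ≤ 1/3 :=
          one_div_le_one_div_of_le (by norm_num) (by exact_mod_cast (by omega : 3 ≤ x))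
        have l2 : (1:ℚ)/y ≤ 1/3 :=
          one_div_le_one_div_of_le (by norm_num) (by exact_mod_cast (by omega : 3 ≤ y))
        have l3 : (1:ℚ)/z ≤ 1/3 :=
          one_div_le_one_div_of_le (by norm_num) (by exact_mod_cast h3)
        linarith
      subst hz3
      rcases Nat.lt_or_ge y 3 with hy3 | hy3
      · right; right; right; left; exact ⟨by omega, by omega, rfl⟩
      · have hy3' : y = 3 := by
          by_contra hne
          have h4 : 4 ≤ y := by omega
          have l1 : (1:ℚ)/x ≤ 1/4 :=
            one_div_le_one_div_of_le (by norm_num) (by exact_mod_cast (by omega : 4 ≤ x))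
          have l2 : (1:ℚ)/y ≤ 1/4 :=
            one_div_le_one_div_of_le (by norm_num) (by exact_mod_cast h4)
          push_cast at h
          linarith
        subst hy3'
        have hx6 : x < 6 := by
          by_contra hge
          have l1 : (1:ℚ)/x ≤ 1/6 :=
            one_div_le_one_div_of_le (by norm_num) (by exact_mod_cast (by omega : 6 ≤ x))
          push_cast at h
          linarith
        interval_cases x
        · right; right; left; exact ⟨rfl, rfl, rfl⟩
        · right; left; exact ⟨rfl, rfl, rfl⟩
        · left; exact ⟨rfl, rfl, rfl⟩
  · rintro (⟨h1,h2,h3⟩|⟨h1,h2,h3⟩|⟨h1,h2,h3⟩|⟨h1,h2,h3⟩|⟨h1,h2,h3⟩)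
    · subst h1; subst h2; subst h3; norm_num
    · subst h1; subst h2; subst h3; norm_num
    · subst h1; subst h2; subst h3; norm_num
    · subst h2; subst h3
      have : (0:ℚ) < 1/x := by positivity
      push_cast
      linarith
    · subst h3
      have hx1 : (0:ℚ) < 1/x := by positivity
      have hy1 : (0:ℚ) < 1/y := by positivity
      push_cast
      linarith

/-- padded sum identity -/
lemma sum_pad {n : ℕ} (b : Fin n → ℕ)
    (htail : ∀ k : Fin n, 3 ≤ (k : ℕ) → b k = 1) :
    ∑ i, ((1:ℚ) - 1/(b i)) =
      3 - ((1:ℚ)/(if h : 0 < n then (b ⟨0, h⟩ : ℚ) else 1)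
        + 1/(if h : 1 < n then (b ⟨1, h⟩ : ℚ) else 1)
        + 1/(if h : 2 < n then (b ⟨2, h⟩ : ℚ) else 1)) := by
  match n with
  | 0 => simp; norm_num
  | 1 => simp [Fin.sum_univ_succ]; ring
  | 2 => simp [Fin.sum_univ_succ]; ring
  | (m+3) =>
    rw [Fin.sum_univ_succ, Fin.sum_univ_succ, Fin.sum_univ_succ]
    have : ∀ i : Fin m, ((1:ℚ) - 1/(b i.succ.succ.succ)) = 0 := by
      intro i
      rw [htail _ (by simp)]
      norm_num
    rw [Finset.sum_congr rfl (fun i _ => this i), Finset.sum_const, smul_zero]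
    simp [Fin.succ]
    ring

lemma key {r : ℕ} (b : Fin (r+1) → ℕ) (hb : ∀ i, 0 < b i)
    (mono : ∀ i j : Fin (r+1), i ≤ j → b j ≤ b i)
    (htail : ∀ k : Fin (r+1), 3 ≤ (k : ℕ) → b k = 1) :
    ((r : ℚ) - 1 < ∑ i, (1:ℚ)/(b i)) ↔
      IsPlatonicTriple
        (if h : 0 < r+1 then b ⟨0, h⟩ else 1)
        (if h : 1 < r+1 then b ⟨1, h⟩ else 1)
        (if h : 2 < r+1 then b ⟨2, h⟩ else 1) := by
  have hsum : ∑ i, ((1:ℚ) - 1/(b i)) = (r+1 : ℚ) - ∑ i, (1:ℚ)/(b i) := by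
    rw [Finset.sum_sub_distrib, Finset.sum_const, Finset.card_univ, Fintype.card_fin,
      nsmul_eq_mul, mul_one]
    push_cast; ring
  have e := sum_pad b htail
  rw [hsum] at e
  match r with
  | 0 =>
    have hb0 : (0:ℚ) < (b 0 : ℚ) := by exact_mod_cast hb 0
    have hpos : (0:ℚ) < ((b 0 : ℚ))⁻¹ := by positivity
    simp only [Nat.lt_irrefl, dif_neg, dif_pos (by norm_num : (0:ℕ) < 1)]
    norm_num
    constructor
    · intro _
      right; right; right; right
      exact ⟨hb ⟨0, by norm_num⟩, le_refl 1, rfl⟩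
    · intro _
      rw [Fin.sum_univ_one]
      linarith [hpos]
  | 1 =>
    simp only [dif_pos (by norm_num : (0:ℕ) < 2), dif_pos (by norm_num : (1:ℕ) < 2),
      dif_neg (by norm_num : ¬ (2:ℕ) < 2)]
    constructor
    · intro _
      right; right; right; right
      exact ⟨mono ⟨0, by norm_num⟩ ⟨1, by norm_num⟩ (by norm_num [Fin.le_def]),
        hb ⟨1, by norm_num⟩, rfl⟩
    · intro _
      rw [Fin.sum_univ_two]
      have h0 : (0:ℚ) < (b 0 : ℚ) := by exact_mod_cast hb 0
      have h1 : (0:ℚ) < (b 1 : ℚ) := by exact_mod_cast hb 1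
      push_cast
      have : (0:ℚ) < 1/(b 0) := by positivity
      have : (0:ℚ) < 1/(b 1) := by positivity
      linarith
  | (m+2) =>
    have h0 : (0:ℕ) < m+3 := by omega
    have h1 : (1:ℕ) < m+3 := by omega
    have h2 : (2:ℕ) < m+3 := by omega
    simp only [dif_pos h0, dif_pos h1, dif_pos h2] at e ⊢
    rw [← triple_char (hb ⟨2, h2⟩)
      (mono ⟨0, h0⟩ ⟨1, h1⟩ (by norm_num [Fin.le_def]))
      (mono ⟨1, h1⟩ ⟨2, h2⟩ (by norm_num [Fin.le_def]))]
    push_cast at e ⊢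
    constructor <;> intro h <;> linarith


/-- The inequality `1/a_0 + … + 1/a_r > r - 1` holds in `ℚ` if and only if
`(a_0, …, a_r)` is a platonic tuple. -/
theorem sum_reciprocals_gt_iff_isPlatonicTuple (r : ℕ) (a : Fin (r + 1) → ℕ)
    (ha : ∀ i, 0 < a i) :
    ((r : ℚ) - 1 < ∑ i, (1 : ℚ) / (a i : ℚ)) ↔ IsPlatonicTuple a := by
  constructor
  · intro h
    set σ : Equiv.Perm (Fin (r+1)) := (Fin.revPerm).trans (Tuple.sort a) with hσ
    have mono : ∀ i j : Fin (r+1), i ≤ j → a (σ j) ≤ a (σ i) := by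
      intro i j hij
      have : Fin.rev j ≤ Fin.rev i := Fin.rev_le_rev.mpr hij
      simpa [hσ, Equiv.trans_apply] using Tuple.monotone_sort a this
    have hsum : (r:ℚ) - 1 < ∑ i, (1:ℚ)/(a (σ i)) := by
      rwa [Equiv.sum_comp σ (fun i => (1:ℚ)/(a i))]
    have hsub : ∑ i, ((1:ℚ) - 1/(a (σ i))) = (r+1 : ℚ) - ∑ i, (1:ℚ)/(a (σ i)) := by
      rw [Finset.sum_sub_distrib, Finset.sum_const, Finset.card_univ, Fintype.card_fin,
        nsmul_eq_mul, mul_one]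
      push_cast; ring
    have hlt2 : ∑ i, ((1:ℚ) - 1/(a (σ i))) < 2 := by rw [hsub]; linarith
    have htail : ∀ k : Fin (r+1), 3 ≤ (k : ℕ) → a (σ k) = 1 := by
      intro k hk
      by_contra hne
      have hk2 : 2 ≤ a (σ k) := by have := ha (σ k); omega
      have hr3 : 3 < r + 1 := lt_of_le_of_lt hk k.isLt
      have h0 : (0:ℕ) < r+1 := by omega
      have h1 : (1:ℕ) < r+1 := by omega
      have h2 : (2:ℕ) < r+1 := by omega
      set S : Finset (Fin (r+1)) := {⟨0,h0⟩, ⟨1,h1⟩, ⟨2,h2⟩, k} with hS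
      have hcard : S.card = 4 := by
        rw [hS]
        rw [Finset.card_insert_of_notMem (by simp [Fin.ext_iff]; omega),
          Finset.card_insert_of_notMem (by simp [Fin.ext_iff]; omega),
          Finset.card_insert_of_notMem (by simp [Fin.ext_iff]; omega),
          Finset.card_singleton]
      have hmem : ∀ i ∈ S, (1:ℚ)/2 ≤ 1 - 1/(a (σ i)) := by
        intro i hi
        have hile : i ≤ k := by
          rw [hS] at hi
          simp only [Finset.mem_insert, Finset.mem_singleton] at hi
          rcases hi with h | h | h | h <;> subst h <;> simp [Fin.le_def] <;> omega
        have hge2 : 2 ≤ a (σ i) := hk2.trans (mono i k hile)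
        have : (1:ℚ)/(a (σ i)) ≤ 1/2 :=
          one_div_le_one_div_of_le (by norm_num) (by exact_mod_cast hge2)
        linarith
      have hbound := Finset.card_nsmul_le_sum S (fun i => (1:ℚ) - 1/(a (σ i))) ((1:ℚ)/2) hmem
      rw [hcard] at hbound
      have h4 : ((4:ℕ) • ((1:ℚ)/2)) = 2 := by norm_num
      rw [h4] at hbound
      have hle : ∑ i ∈ S, ((1:ℚ) - 1/(a (σ i))) ≤ ∑ i, ((1:ℚ) - 1/(a (σ i))) := by
        apply Finset.sum_le_sum_of_subset_of_nonneg (Finset.subset_univ S)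
        intro i _ _
        have h1a : 1 ≤ a (σ i) := ha _
        have : (1:ℚ)/(a (σ i)) ≤ 1/1 :=
          one_div_le_one_div_of_le (by norm_num) (by exact_mod_cast h1a)
        rw [div_one] at this
        linarith
      linarith
    refine ⟨σ, mono, ?_, htail⟩
    exact (key (fun i => a (σ i)) (fun i => ha _) mono htail).mp hsum
  · rintro ⟨σ, mono, htriple, htail⟩
    rw [← Equiv.sum_comp σ (fun i => (1:ℚ)/(a i))]
    exact (key (fun i => a (σ i)) (fun i => ha _) mono htail).mpr htriple
end

section
/- Let 𝔩_0, 𝔩_1, 𝔩_2 be positive integers, set 𝔩 = gcd(𝔩_0, 𝔩_1, 𝔩_2) and 𝔩_{ij} = gcd(𝔩_i/𝔩, 𝔩_j/𝔩) for 0 ≤ i < j ≤ 2. Then the identity 𝔩·(𝔩·𝔩_{01}·𝔩_{02}·𝔩_{12} − (𝔩_{01} + 𝔩_{02} + 𝔩_{12})) = −2 holds if and only if one of the following holds: (a) there are pairwise coprime positive integers c_0, c_1, c_2 and a positive integer s with gcd(c_2, s) = 1 such that, after a suitable permutation of the indices, 𝔩_0 = s·c_0, 𝔩_1 = s·c_1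 and 𝔩_2 = c_2; (b) there are pairwise coprime positive integers c_0, c_1, c_2 such that 𝔩_0 = 2c_0, 𝔩_1 = 2c_1 and 𝔩_2 = 2c_2. -/
lemma gz_aux (a b c : ℕ) (ha : 2 ≤ a) (hb : 2 ≤ b) (hc : 1 ≤ c) : a + b + c < a*b*c + 2 := by
  nlinarith [mul_le_mul ha hb (by omega : (0:ℕ) ≤ 2) (by omega : (0:ℕ) ≤ a), hc]

lemma gz_two_ones (a b c : ℕ) (ha : 0 < a) (hb : 0 < b) (hc : 0 < c)
    (h : a*b*c + 2 = a + b + c) :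
    (b = 1 ∧ c = 1) ∨ (a = 1 ∧ c = 1) ∨ (a = 1 ∧ b = 1) := by
  by_cases h1 : 2 ≤ a <;> by_cases h2 : 2 ≤ b <;> by_cases h3 : 2 ≤ c
  · exact absurd h (by linarith [gz_aux a b c h1 h2 hc])
  · exact absurd h (by linarith [gz_aux a b c h1 h2 hc])
  · exact absurd h (by linarith [gz_aux a c b h1 h3 hb])
  · exact Or.inl ⟨by omega, by omega⟩
  · exact absurd h (by linarith [gz_aux b c a h2 h3 ha])
  · exact Or.inr (Or.inl ⟨by omega, by omega⟩)
  · exact Or.inr (Or.inr ⟨by omega, by omega⟩)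
  · exact Or.inr (Or.inr ⟨by omega, by omega⟩)

lemma gz_all_ones (a b c : ℕ) (ha : 0 < a) (hb : 0 < b) (hc : 0 < c)
    (h : 2*(a*b*c) + 1 = a + b + c) : a = 1 ∧ b = 1 ∧ c = 1 := by
  have habc : 0 < a*b*c := Nat.mul_pos (Nat.mul_pos ha hb) hc
  by_cases h1 : 2 ≤ a <;> by_cases h2 : 2 ≤ b <;> by_cases h3 : 2 ≤ c
  · exact absurd h (by linarith [gz_aux a b c h1 h2 hc])
  · exact absurd h (by linarith [gz_aux a b c h1 h2 hc])
  · exact absurd h (by linarith [gz_aux a c b h1 h3 hb])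
  · have hb1 : b = 1 := by omega
    have hc1 : c = 1 := by omega
    subst hb1; subst hc1; simp at h; omega
  · exact absurd h (by linarith [gz_aux b c a h2 h3 ha])
  · have ha1 : a = 1 := by omega
    have hc1 : c = 1 := by omega
    subst ha1; subst hc1; simp at h; omega
  · have ha1 : a = 1 := by omega
    have hb1 : b = 1 := by omega
    subst ha1; subst hb1; simp at h; omega
  · omega

lemma gz_identA (s c0 c1 c2 : ℕ) (h01 : Nat.gcd c0 c1 = 1) (h02 : Nat.gcd c0 c2 = 1)
    (h12 : Nat.gcd c1 c2 = 1) (hc2s : Nat.gcd c2 s = 1) :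
    Nat.gcd (s*c0) (Nat.gcd (s*c1) c2) = 1 ∧ Nat.gcd (s*c0) (s*c1) = s ∧
    Nat.gcd (s*c0) c2 = 1 ∧ Nat.gcd (s*c1) c2 = 1 := by
  have hs2 : Nat.Coprime s c2 := Nat.coprime_comm.mp hc2s
  have hb : Nat.gcd (s*c1) c2 = 1 := Nat.Coprime.mul hs2 h12
  have ha : Nat.gcd (s*c0) c2 = 1 := Nat.Coprime.mul hs2 h02
  refine ⟨?_, ?_, ha, hb⟩
  · rw [hb]; exact Nat.gcd_one_right _
  · rw [Nat.gcd_mul_left, h01, mul_one]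

lemma gz_buildA (x y z : ℕ) (hx : 0 < x) (hy : 0 < y) (hz : 0 < z)
    (hxz : Nat.gcd x z = 1) (hyz : Nat.gcd y z = 1) :
    ∃ c0 c1 c2 s : ℕ, 0 < c0 ∧ 0 < c1 ∧ 0 < c2 ∧ 0 < s ∧
      Nat.gcd c0 c1 = 1 ∧ Nat.gcd c0 c2 = 1 ∧ Nat.gcd c1 c2 = 1 ∧
      Nat.gcd c2 s = 1 ∧ x = s * c0 ∧ y = s * c1 ∧ z = c2 := by
  set s := Nat.gcd x y with hs
  have hspos : 0 < s := Nat.gcd_pos_of_pos_left _ hx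
  have hdx : s ∣ x := Nat.gcd_dvd_left x y
  have hdy : s ∣ y := Nat.gcd_dvd_right x y
  have hc0x : x / s ∣ x := ⟨s, (Nat.div_mul_cancel hdx).symm⟩
  have hc1y : y / s ∣ y := ⟨s, (Nat.div_mul_cancel hdy).symm⟩
  refine ⟨x / s, y / s, z, s, Nat.div_pos (Nat.le_of_dvd hx hdx) hspos,
    Nat.div_pos (Nat.le_of_dvd hy hdy) hspos, hz, hspos,
    Nat.coprime_div_gcd_div_gcd hspos,
    Nat.Coprime.coprime_dvd_left hc0x hxz,
    Nat.Coprime.coprime_dvd_left hc1y hyz,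
    Nat.Coprime.coprime_dvd_right hdx (Nat.coprime_comm.mp hxz),
    (Nat.mul_div_cancel' hdx).symm, (Nat.mul_div_cancel' hdy).symm, rfl⟩

lemma gz_perm3 (σ : Equiv.Perm (Fin 3)) :
    (σ 0 = 0 ∧ σ 1 = 1 ∧ σ 2 = 2) ∨ (σ 0 = 0 ∧ σ 1 = 2 ∧ σ 2 = 1) ∨
    (σ 0 = 1 ∧ σ 1 = 0 ∧ σ 2 = 2) ∨ (σ 0 = 1 ∧ σ 1 = 2 ∧ σ 2 = 0) ∨
    (σ 0 = 2 ∧ σ 1 = 0 ∧ σ 2 = 1) ∨ (σ 0 = 2 ∧ σ 1 = 1 ∧ σ 2 = 0) := by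
  revert σ; decide

lemma gz_posvec (c0 c1 c2 : ℕ) (h0 : 0 < c0) (h1 : 0 < c1) (h2 : 0 < c2) :
    ∀ i : Fin 3, 0 < ![c0, c1, c2] i := by
  intro i; fin_cases i <;> simpa

lemma gz_pairwise (c0 c1 c2 : ℕ) (q01 : Nat.gcd c0 c1 = 1) (q02 : Nat.gcd c0 c2 = 1)
    (q12 : Nat.gcd c1 c2 = 1) :
    ∀ i j : Fin 3, i ≠ j → Nat.gcd (![c0, c1, c2] i) (![c0, c1, c2] j) = 1 := by
  intro i j hij
  fin_cases i <;> fin_cases j <;> simp_all [Nat.gcd_comm]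

/-- Lemma 5.7 of the paper: for positive integers `𝔩_0, 𝔩_1, 𝔩_2` with
`𝔩 = gcd(𝔩_0, 𝔩_1, 𝔩_2)` and `𝔩_{ij} = gcd(𝔩_i/𝔩, 𝔩_j/𝔩)`, the identity
`𝔩·(𝔩·𝔩_{01}·𝔩_{02}·𝔩_{12} − (𝔩_{01} + 𝔩_{02} + 𝔩_{12})) = −2` holds if and only if
one of the two arithmetic conditions (a), (b) holds. -/
theorem genus_zero_identity_iff (l : Fin 3 → ℕ) (hl : ∀ i, 0 < l i)
    (g : ℕ) (hg : g = Nat.gcd (l 0) (Nat.gcd (l 1) (l 2)))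
    (g01 g02 g12 : ℕ)
    (h01 : g01 = Nat.gcd (l 0 / g) (l 1 / g))
    (h02 : g02 = Nat.gcd (l 0 / g) (l 2 / g))
    (h12 : g12 = Nat.gcd (l 1 / g) (l 2 / g)) :
    (g : ℤ) * ((g : ℤ) * (g01 : ℤ) * (g02 : ℤ) * (g12 : ℤ)
        - ((g01 : ℤ) + (g02 : ℤ) + (g12 : ℤ))) = -2 ↔
      ((∃ (c : Fin 3 → ℕ) (s : ℕ) (σ : Equiv.Perm (Fin 3)),
          (∀ i, 0 < c i) ∧ 0 < s ∧
          (∀ i j, i ≠ j → Nat.gcd (c i) (c j) = 1) ∧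
          Nat.gcd (c 2) s = 1 ∧
          l (σ 0) = s * c 0 ∧ l (σ 1) = s * c 1 ∧ l (σ 2) = c 2) ∨
        (∃ c : Fin 3 → ℕ,
          (∀ i, 0 < c i) ∧
          (∀ i j, i ≠ j → Nat.gcd (c i) (c j) = 1) ∧
          l 0 = 2 * c 0 ∧ l 1 = 2 * c 1 ∧ l 2 = 2 * c 2)) := by
  have hd : ∀ i, g ∣ l i := by
    intro i
    fin_cases i
    · exact hg ▸ Nat.gcd_dvd_left _ _
    · exact hg ▸ dvd_trans (Nat.gcd_dvd_right _ _) (Nat.gcd_dvd_left _ _)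
    · exact hg ▸ dvd_trans (Nat.gcd_dvd_right _ _) (Nat.gcd_dvd_right _ _)
  have hgpos : 0 < g := hg ▸ Nat.gcd_pos_of_pos_left _ (hl 0)
  constructor
  · intro hid
    have hgdvd2 : g ∣ 2 := by
      have hz : (g : ℤ) ∣ 2 := by
        have h2 : (g : ℤ) ∣ -2 := ⟨_, hid.symm⟩
        exact dvd_neg.mp h2
      exact_mod_cast hz
    have hg12 : g = 1 ∨ g = 2 := (Nat.dvd_prime Nat.prime_two).mp hgdvd2
    rcases hg12 with hg1 | hg2
    · -- g = 1
      rw [hg1] at h01 h02 h12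
      simp only [Nat.div_one] at h01 h02 h12
      have p01 : 0 < g01 := h01 ▸ Nat.gcd_pos_of_pos_left _ (hl 0)
      have p02 : 0 < g02 := h02 ▸ Nat.gcd_pos_of_pos_left _ (hl 0)
      have p12 : 0 < g12 := h12 ▸ Nat.gcd_pos_of_pos_left _ (hl 1)
      have hN : g01 * g02 * g12 + 2 = g01 + g02 + g12 := by
        rw [hg1] at hid
        have : (g01:ℤ) * g02 * g12 + 2 = (g01:ℤ) + g02 + g12 := by push_cast at hid; nlinarith [hid]
        exact_mod_cast this
      rcases gz_two_ones g01 g02 g12 p01 p02 p12 hN with ⟨q1, q2⟩ | ⟨q1, q2⟩ | ⟨q1, q2⟩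
      · -- g02 = 1, g12 = 1 : s = gcd l0 l1, identity perm
        obtain ⟨c0, c1, c2, s, r0, r1, r2, rs, q01, q02, q12, qs, ex, ey, ez⟩ :=
          gz_buildA (l 0) (l 1) (l 2) (hl 0) (hl 1) (hl 2)
            (h02.symm.trans q1) (h12.symm.trans q2)
        refine Or.inl ⟨![c0, c1, c2], s, Equiv.refl _, ?_, rs, ?_, ?_, ?_, ?_, ?_⟩
        · exact gz_posvec c0 c1 c2 r0 r1 r2
        · exact gz_pairwise c0 c1 c2 q01 q02 q12
        · simpa using qs
        · simpa using ex
        · simpa using ey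
        · simpa using ez
      · -- g01 = 1, g12 = 1 : x = l0, y = l2, z = l1, σ = swap 1 2
        obtain ⟨c0, c1, c2, s, r0, r1, r2, rs, q01, q02, q12, qs, ex, ey, ez⟩ :=
          gz_buildA (l 0) (l 2) (l 1) (hl 0) (hl 2) (hl 1)
            (h01.symm.trans q1) ((Nat.gcd_comm _ _).trans (h12.symm.trans q2))
        refine Or.inl ⟨![c0, c1, c2], s, Equiv.swap 1 2, ?_, rs, ?_, ?_, ?_, ?_, ?_⟩
        · exact gz_posvec c0 c1 c2 r0 r1 r2
        · exact gz_pairwise c0 c1 c2 q01 q02 q12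
        · simpa using qs
        · rw [show (Equiv.swap (1:Fin 3) 2) 0 = 0 from by decide]; simpa using ex
        · rw [show (Equiv.swap (1:Fin 3) 2) 1 = 2 from by decide]; simpa using ey
        · rw [show (Equiv.swap (1:Fin 3) 2) 2 = 1 from by decide]; simpa using ez
      · -- g01 = 1, g02 = 1 : x = l1, y = l2, z = l0, σ = finRotate 3
        obtain ⟨c0, c1, c2, s, r0, r1, r2, rs, q01, q02, q12, qs, ex, ey, ez⟩ :=
          gz_buildA (l 1) (l 2) (l 0) (hl 1) (hl 2) (hl 0)
            ((Nat.gcd_comm _ _).trans (h01.symm.trans q1))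
            ((Nat.gcd_comm _ _).trans (h02.symm.trans q2))
        refine Or.inl ⟨![c0, c1, c2], s, finRotate 3, ?_, rs, ?_, ?_, ?_, ?_, ?_⟩
        · exact gz_posvec c0 c1 c2 r0 r1 r2
        · exact gz_pairwise c0 c1 c2 q01 q02 q12
        · simpa using qs
        · rw [show (finRotate 3) 0 = 1 from by decide]; simpa using ex
        · rw [show (finRotate 3) 1 = 2 from by decide]; simpa using ey
        · rw [show (finRotate 3) 2 = 0 from by decide]; simpa using ez
    · -- g = 2
      rw [hg2] at h01 h02 h12 hid
      have hd0 : (2:ℕ) ∣ l 0 := hg2 ▸ hd 0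
      have hd1 : (2:ℕ) ∣ l 1 := hg2 ▸ hd 1
      have hd2 : (2:ℕ) ∣ l 2 := hg2 ▸ hd 2
      have p0 : 0 < l 0 / 2 := Nat.div_pos (Nat.le_of_dvd (hl 0) hd0) (by norm_num)
      have p1 : 0 < l 1 / 2 := Nat.div_pos (Nat.le_of_dvd (hl 1) hd1) (by norm_num)
      have p2 : 0 < l 2 / 2 := Nat.div_pos (Nat.le_of_dvd (hl 2) hd2) (by norm_num)
      have q01 : 0 < g01 := h01 ▸ Nat.gcd_pos_of_pos_left _ p0
      have q02 : 0 < g02 := h02 ▸ Nat.gcd_pos_of_pos_left _ p0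
      have q12 : 0 < g12 := h12 ▸ Nat.gcd_pos_of_pos_left _ p1
      have hN : 2 * (g01 * g02 * g12) + 1 = g01 + g02 + g12 := by
        have : 2 * ((g01:ℤ) * g02 * g12) + 1 = (g01:ℤ) + g02 + g12 := by
          push_cast at hid; nlinarith [hid]
        exact_mod_cast this
      obtain ⟨u1, u2, u3⟩ := gz_all_ones g01 g02 g12 q01 q02 q12 hN
      refine Or.inr ⟨![l 0 / 2, l 1 / 2, l 2 / 2], ?_, ?_, ?_, ?_, ?_⟩
      · exact gz_posvec _ _ _ p0 p1 p2
      · exact gz_pairwise _ _ _ (h01.symm.trans u1) (h02.symm.trans u2) (h12.symm.trans u3)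
      · simpa using (Nat.mul_div_cancel' hd0).symm
      · simpa using (Nat.mul_div_cancel' hd1).symm
      · simpa using (Nat.mul_div_cancel' hd2).symm
  · intro hcond
    rcases hcond with ⟨c, s, σ, hcpos, hspos, hcop, hc2s, e0, e1, e2⟩ | ⟨c, hcpos, hcop, f0, f1, f2⟩
    · obtain ⟨hI1, hIs, hIa, hIb⟩ := gz_identA s (c 0) (c 1) (c 2)
        (hcop 0 1 (by decide)) (hcop 0 2 (by decide)) (hcop 1 2 (by decide)) hc2s
      have hg1 : g = 1 := by
        have d0 : g ∣ s * c 0 := e0 ▸ hd (σ 0)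
        have d1 : g ∣ s * c 1 := e1 ▸ hd (σ 1)
        have d2 : g ∣ c 2 := e2 ▸ hd (σ 2)
        exact Nat.dvd_one.mp (hI1 ▸ Nat.dvd_gcd d0 (Nat.dvd_gcd d1 d2))
      rcases gz_perm3 σ with ⟨p0,p1,p2⟩|⟨p0,p1,p2⟩|⟨p0,p1,p2⟩|⟨p0,p1,p2⟩|⟨p0,p1,p2⟩|⟨p0,p1,p2⟩ <;>
        rw [p0] at e0 <;> rw [p1] at e1 <;> rw [p2] at e2 <;>
        simp only [hg1, Nat.div_one, e0, e1, e2] at h01 h02 h12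
      · rw [hIs] at h01; rw [hIa] at h02; rw [hIb] at h12
        rw [h01, h02, h12, hg1]; push_cast; ring
      · rw [hIa] at h01; rw [hIs] at h02; rw [Nat.gcd_comm, hIb] at h12
        rw [h01, h02, h12, hg1]; push_cast; ring
      · rw [Nat.gcd_comm, hIs] at h01; rw [hIb] at h02; rw [hIa] at h12
        rw [h01, h02, h12, hg1]; push_cast; ring
      · rw [Nat.gcd_comm, hIa] at h01; rw [Nat.gcd_comm, hIb] at h02; rw [hIs] at h12
        rw [h01, h02, h12, hg1]; push_cast; ring
      · rw [hIb] at h01; rw [Nat.gcd_comm, hIs] at h02; rw [Nat.gcd_comm, hIa] at h12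
        rw [h01, h02, h12, hg1]; push_cast; ring
      · rw [Nat.gcd_comm, hIb] at h01; rw [Nat.gcd_comm, hIa] at h02; rw [Nat.gcd_comm, hIs] at h12
        rw [h01, h02, h12, hg1]; push_cast; ring
    · have inner : Nat.gcd (c 0) (Nat.gcd (c 1) (c 2)) = 1 :=
        Nat.Coprime.coprime_dvd_right (Nat.gcd_dvd_left _ _) (hcop 0 1 (by decide))
      have hg2 : g = 2 := by
        rw [hg, f0, f1, f2, Nat.gcd_mul_left, Nat.gcd_mul_left, inner, mul_one]
      have d0 : l 0 / g = c 0 := by rw [hg2, f0, Nat.mul_div_cancel_left _ (by norm_num : 0 < 2)]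
      have d1 : l 1 / g = c 1 := by rw [hg2, f1, Nat.mul_div_cancel_left _ (by norm_num : 0 < 2)]
      have d2 : l 2 / g = c 2 := by rw [hg2, f2, Nat.mul_div_cancel_left _ (by norm_num : 0 < 2)]
      have v01 : g01 = 1 := by rw [h01, d0, d1]; exact hcop 0 1 (by decide)
      have v02 : g02 = 1 := by rw [h02, d0, d2]; exact hcop 0 2 (by decide)
      have v12 : g12 = 1 := by
        rw [h12, d1, d2]
        exact hcop 1 2 (by decide)
      rw [v01, v02, v12, hg2]; norm_num
end

section
/- Let r ≥ 1, let 𝔩_0, …, 𝔩_r and m be positive integers with gcd(𝔩_i, m) = 1 for all i = 0, …, r. Write b̄ = lcm(𝔩_0, …, 𝔩_r), b_i = b̄/𝔩_i, b(i) = gcd{ b_j : 0 ≤ j ≤ r, j ≠ i }, and for the extended family (𝔩_0, …, 𝔩_r, 𝔩_{r+1}) with 𝔩_{r+1} = m write b̄', b'_i, b'(i) for the corresponding quantities. Then: (1) b̄' = b̄·m; (2) b'(i) = b(i) for every 0 ≤ i ≤ r; (3) b'(r+1) = m. Consequently, setting E_r(𝔩_0,…,𝔩_r) = (𝔩_0⋯𝔩_r)/(2b̄)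 · ((r−1) − Σ_{i=0}^r b(i)/𝔩_i) + 1 as a rational number, one has E_{r+1}(𝔩_0, …, 𝔩_r, m) = E_r(𝔩_0, …, 𝔩_r). -/
/-- `b̄ = lcm(𝔩_0, …, 𝔩_{n-1})`. -/
def bbar {n : ℕ} (l : Fin n → ℕ) : ℕ := Finset.univ.lcm l

/-- `b(i) = gcd{ b_j : j ≠ i }` where `b_j = b̄ / 𝔩_j`. -/
def bOmit {n : ℕ} (l : Fin n → ℕ) (i : Fin n) : ℕ :=
  (Finset.univ.erase i).gcd fun j => bbar l / l j

/-- The genus expression `E_r(𝔩_0,…,𝔩_r) = (𝔩_0⋯𝔩_r)/(2b̄)·((r−1) − Σ b(i)/𝔩_i) + 1`. -/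
def genusE {r : ℕ} (l : Fin (r + 1) → ℕ) : ℚ :=
  (∏ i, (l i : ℚ)) / (2 * (bbar l : ℚ)) *
      ((r : ℚ) - 1 - ∑ i, (bOmit l i : ℚ) / (l i : ℚ)) + 1

/-! Since `m` is coprime to every `𝔩_i`, it is coprime to `b̄`; hence `b̄' = b̄ m`,
`b'_j = m b_j` for `j ≤ r` and `b'_{r+1} = b̄`. So `b'(i) = gcd(b̄, m b(i)) = b(i)` because
`b(i) ∣ b̄`, and `b'(r+1) = m · gcd_j b_j = m` because the cofactors `b_j` are coprime. In `E_{r+1}`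
the new factor `m` of the product cancels against `b̄'`, and the new summand `b'(r+1)/m = 1`
absorbs the shift of `r`. -/

open Finset

section FinSnoc

variable {n : ℕ} (f : Fin (n + 1) → ℕ)

lemma Fin.lcm_univ_castSucc :
    univ.lcm f = Nat.lcm (f (Fin.last n)) (univ.lcm fun i : Fin n => f i.castSucc) := by
  classical
  rw [Fin.univ_castSuccEmb, cons_eq_insert, lcm_insert, map_eq_image, lcm_image]
  rfl

lemma Fin.gcd_univ_erase_last :
    (univ.erase (Fin.last n)).gcd f = univ.gcd fun i : Fin n => f i.castSucc := by
  classical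
  rw [Fin.univ_castSuccEmb, erase_cons, map_eq_image, gcd_image]
  rfl

lemma Fin.gcd_univ_erase_castSucc (i : Fin n) :
    (univ.erase i.castSucc).gcd f =
      Nat.gcd (f (Fin.last n)) ((univ.erase i).gcd fun j => f j.castSucc) := by
  classical
  rw [Fin.univ_castSuccEmb, cons_eq_insert, erase_insert_of_ne (Fin.castSucc_lt_last i).ne',
    ← Fin.coe_castSuccEmb, ← map_erase, gcd_insert, map_eq_image, gcd_image]
  rfl

end FinSnoc

section Lcm

variable {n : ℕ} (l : Fin n → ℕ)

lemma dvd_bbar (j : Fin n) : l j ∣ bbar l := dvd_lcm (mem_univ j)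

variable {l}

lemma bbar_ne_zero (hl : ∀ i, l i ≠ 0) : bbar l ≠ 0 :=
  lcm_ne_zero_iff.mpr fun i _ => hl i

lemma coprime_bbar {m : ℕ} (hcop : ∀ i, Nat.Coprime (l i) m) : Nat.Coprime (bbar l) m :=
  (Nat.Coprime.prod_left fun i _ => hcop i).coprime_dvd_left
    (lcm_dvd fun j _ => dvd_prod_of_mem l (mem_univ j))

/-- A common divisor `d` of the cofactors `b_j` makes `b̄ / d` a common multiple of the `𝔩_j`. -/
lemma gcd_bbar_div_eq_one [NeZero n] (hl : ∀ i, l i ≠ 0) :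
    (univ.gcd fun j => bbar l / l j) = 1 := by
  set d := univ.gcd fun j => bbar l / l j
  have hd : ∀ j, d * l j ∣ bbar l := fun j => by
    rw [mul_comm, ← Nat.dvd_div_iff_mul_dvd (dvd_bbar l j)]
    exact gcd_dvd (mem_univ j)
  have hd_bbar : d ∣ bbar l := dvd_of_mul_right_dvd (hd 0)
  have hbbar : bbar l ∣ bbar l / d :=
    lcm_dvd fun j _ => (Nat.dvd_div_iff_mul_dvd hd_bbar).mpr (hd j)
  rcases Nat.div_eq_self.mp (Nat.dvd_antisymm (Nat.div_dvd_of_dvd hd_bbar) hbbar) with h | h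
  · exact absurd h (bbar_ne_zero hl)
  · exact h

lemma bOmit_dvd_bbar {i j : Fin n} (hji : j ≠ i) : bOmit l i ∣ bbar l :=
  (gcd_dvd (mem_erase.mpr ⟨hji, mem_univ j⟩)).trans (Nat.div_dvd_of_dvd (dvd_bbar l j))

lemma bbar_snoc (m : ℕ) : bbar (Fin.snoc l m : Fin (n + 1) → ℕ) = Nat.lcm m (bbar l) := by
  rw [bbar, Fin.lcm_univ_castSucc]
  simp [bbar]

end Lcm

section Coprime

variable {n : ℕ} {l : Fin n → ℕ} {m : ℕ} (hcop : ∀ i, Nat.Coprime (l i) m)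
include hcop

lemma bbar_snoc_of_coprime : bbar (Fin.snoc l m : Fin (n + 1) → ℕ) = bbar l * m := by
  rw [bbar_snoc, Nat.lcm_comm, (coprime_bbar hcop).lcm_eq_mul]

lemma bbar_snoc_div_castSucc (j : Fin n) :
    bbar (Fin.snoc l m : Fin (n + 1) → ℕ) /
      (Fin.snoc l m : Fin (n + 1) → ℕ) j.castSucc = m * (bbar l / l j) := by
  rw [bbar_snoc_of_coprime hcop, Fin.snoc_castSucc, mul_comm, Nat.mul_div_assoc m (dvd_bbar l j)]

lemma bbar_snoc_div_last (hm : m ≠ 0) :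
    bbar (Fin.snoc l m : Fin (n + 1) → ℕ) /
      (Fin.snoc l m : Fin (n + 1) → ℕ) (Fin.last n) = bbar l := by
  rw [bbar_snoc_of_coprime hcop, Fin.snoc_last, Nat.mul_div_cancel _ (Nat.pos_of_ne_zero hm)]

lemma bOmit_snoc_castSucc [Nontrivial (Fin n)] (hm : m ≠ 0) (i : Fin n) :
    bOmit (Fin.snoc l m : Fin (n + 1) → ℕ) i.castSucc = bOmit l i := by
  obtain ⟨j, hji⟩ := exists_ne i
  rw [bOmit, Fin.gcd_univ_erase_castSucc, bbar_snoc_div_last hcop hm]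
  simp only [bbar_snoc_div_castSucc hcop]
  rw [Finset.gcd_mul_left, normalize_eq, ← bOmit,
    Nat.Coprime.gcd_mul_left_cancel_right _ (coprime_bbar hcop).symm,
    Nat.gcd_eq_right (bOmit_dvd_bbar hji)]

lemma bOmit_snoc_last [NeZero n] (hl : ∀ i, l i ≠ 0) :
    bOmit (Fin.snoc l m : Fin (n + 1) → ℕ) (Fin.last n) = m := by
  rw [bOmit, Fin.gcd_univ_erase_last]
  simp only [bbar_snoc_div_castSucc hcop]
  rw [Finset.gcd_mul_left, gcd_bbar_div_eq_one hl, normalize_eq, mul_one]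

end Coprime

lemma genusE_snoc {r : ℕ} {l : Fin (r + 1) → ℕ} {m : ℕ} (hm : m ≠ 0)
    (hbbar : bbar (Fin.snoc l m : Fin (r + 1 + 1) → ℕ) = bbar l * m)
    (hcastSucc : ∀ i, bOmit (Fin.snoc l m : Fin (r + 1 + 1) → ℕ) i.castSucc = bOmit l i)
    (hlast : bOmit (Fin.snoc l m : Fin (r + 1 + 1) → ℕ) (Fin.last (r + 1)) = m) :
    genusE (Fin.snoc l m : Fin (r + 1 + 1) → ℕ) = genusE l := by
  rw [genusE, genusE, hbbar, Fin.prod_univ_castSucc, Fin.sum_univ_castSucc]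
  simp only [Fin.snoc_castSucc, Fin.snoc_last, hcastSucc, hlast]
  have hmQ : (m : ℚ) ≠ 0 := Nat.cast_ne_zero.mpr hm
  push_cast
  field_simp
  ring

/-- Adjoining an exponent `m` coprime to all the `𝔩_i` multiplies the lcm by `m`,
leaves all `b(i)` unchanged, produces `b(r+1) = m`, and does not change the genus. -/
theorem genus_unchanged_by_coprime_extension (r : ℕ) (hr : 1 ≤ r)
    (l : Fin (r + 1) → ℕ) (m : ℕ) (hl : ∀ i, 0 < l i) (hm : 0 < m)
    (hcop : ∀ i, Nat.gcd (l i) m = 1) :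
    bbar (Fin.snoc l m) = bbar l * m ∧
    (∀ i : Fin (r + 1), bOmit (Fin.snoc l m) i.castSucc = bOmit l i) ∧
    bOmit (Fin.snoc l m) (Fin.last (r + 1)) = m ∧
    genusE (Fin.snoc l m : Fin (r + 1 + 1) → ℕ) = genusE l := by
  have : Nontrivial (Fin (r + 1)) := Fin.nontrivial_iff_two_le.mpr (by omega)
  have hbbar := bbar_snoc_of_coprime hcop
  have hcastSucc := bOmit_snoc_castSucc hcop hm.ne'
  have hlast := bOmit_snoc_last hcop fun i => (hl i).ne'
  exact ⟨hbbar, hcastSucc, hlast, genusE_snoc hm.ne' hbbar hcastSucc hlast⟩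
end

section
/- Let r ≥ 2 and let 𝔩_0, …, 𝔩_r be positive integers; set b̄ = lcm(𝔩_0, …, 𝔩_r), b_i = b̄/𝔩_i and b(i) = gcd{ b_j : j ≠ i }. If Σ_{i=0}^r b(i)/𝔩_i = (r − 1) + 2·b̄/(𝔩_0·𝔩_1⋯𝔩_r) holds in the rational numbers, then the set of indices i for which there exists j ≠ i with gcd(𝔩_i, 𝔩_j) > 1 has at most three elements; in particular there exist indices 0 ≤ i ≤ j ≤ k ≤ r such that gcd(𝔩_u, 𝔩_v) = 1 for all u ≠ v with v ∉ {i, j, k}. -/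
lemma bbar_pos {n : ℕ} (l : Fin n → ℕ) (hl : ∀ i, 0 < l i) : 0 < bbar l := by
  rw [pos_iff_ne_zero, Ne, bbar, Finset.lcm_eq_zero_iff]
  rintro ⟨i, -, hi⟩
  exact (hl i).ne' hi

lemma key_dvd {n : ℕ} (hn : 2 ≤ n) (l : Fin n → ℕ) (hl : ∀ i, 0 < l i) (i : Fin n) :
    bOmit l i * Nat.gcd (l i) ((Finset.univ.erase i).lcm l) ∣ l i := by
  set L := (Finset.univ.erase i).lcm l with hLdef
  set b := bOmit l i with hbdef
  have hLpos : 0 < L := by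
    rw [pos_iff_ne_zero, Ne, hLdef, Finset.lcm_eq_zero_iff]
    rintro ⟨j, -, hj⟩
    exact (hl j).ne' hj
  have hbbar : 0 < bbar l := bbar_pos l hl
  have hdvd : ∀ j : Fin n, l j ∣ bbar l := fun j => Finset.dvd_lcm (Finset.mem_univ j)
  have hne : (Finset.univ.erase i).Nonempty := by
    rw [← Finset.card_pos, Finset.card_erase_of_mem (Finset.mem_univ i), Finset.card_univ,
      Fintype.card_fin]
    omega
  -- b divides bbar
  obtain ⟨j0, hj0⟩ := hne
  have hbdvdbar : b ∣ bbar l :=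
    (Finset.gcd_dvd hj0).trans (Nat.div_dvd_of_dvd (hdvd j0))
  have hb0 : b ≠ 0 := by
    intro hb
    have h2 : (0 : ℕ) ∣ bbar l / l j0 := hb ▸ Finset.gcd_dvd hj0
    have := Nat.div_pos (Nat.le_of_dvd hbbar (hdvd j0)) (hl j0)
    omega
  -- each l j (j ≠ i) divides bbar / b
  have h1 : ∀ j ∈ Finset.univ.erase i, l j ∣ bbar l / b := by
    intro j hj
    obtain ⟨c, hc⟩ : b ∣ bbar l / l j := Finset.gcd_dvd hj
    have h3 : bbar l = l j * c * b := by
      have h4 := Nat.div_mul_cancel (hdvd j)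
      rw [← h4, hc]; ring
    exact ⟨c, Nat.div_eq_of_eq_mul_left (by omega) h3⟩
  have hLdvd : L ∣ bbar l / b := Finset.lcm_dvd h1
  have hbL : b * L ∣ bbar l := by
    obtain ⟨c, hc⟩ := hLdvd
    refine ⟨c, ?_⟩
    have := Nat.div_mul_cancel hbdvdbar
    rw [← this, hc]; ring
  -- bbar = lcm (l i) L
  have hbareq : bbar l = Nat.lcm (l i) L := by
    rw [bbar, ← Finset.insert_erase (Finset.mem_univ i), Finset.lcm_insert]
    rfl
  have hmain : bbar l * Nat.gcd (l i) L = l i * L := by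
    rw [hbareq, mul_comm]
    exact Nat.gcd_mul_lcm (l i) L
  have h5 : b * Nat.gcd (l i) L * L ∣ l i * L := by
    rw [← hmain]
    calc b * Nat.gcd (l i) L * L = b * L * Nat.gcd (l i) L := by ring
    _ ∣ bbar l * Nat.gcd (l i) L := mul_dvd_mul_right hbL _
  exact (mul_dvd_mul_iff_right (by omega : L ≠ 0)).mp h5

lemma sort3 {α : Type*} [LinearOrder α] (a b c : α) :
    ∃ i j k : α, i ≤ j ∧ j ≤ k ∧
      ∀ x, (x = a ∨ x = b ∨ x = c) → (x = i ∨ x = j ∨ x = k) := by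
  rcases le_total a b with h1 | h1 <;> rcases le_total b c with h2 | h2 <;>
    rcases le_total a c with h3 | h3
  · exact ⟨a, b, c, h1, h2, by tauto⟩
  · exact ⟨a, b, c, h1, h2, by tauto⟩
  · exact ⟨a, c, b, h3, h2, by tauto⟩
  · exact ⟨c, a, b, h3, h1, by tauto⟩
  · exact ⟨b, a, c, h1, h3, by tauto⟩
  · exact ⟨b, c, a, h2, h3, by tauto⟩
  · exact ⟨c, b, a, h2, h1, by tauto⟩
  · exact ⟨c, b, a, h2, h1, by tauto⟩

/-- If `Σ b(i)/𝔩_i = (r−1) + 2b̄/(𝔩_0⋯𝔩_r)` (i.e. the generic quotient curve has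
genus zero), then at most three indices fail to be coprime to all the others; in
particular there are indices `i ≤ j ≤ k` such that `gcd(𝔩_u, 𝔩_v) = 1` whenever
`u ≠ v` and `v ∉ {i, j, k}`. -/
theorem genus_zero_at_most_three_noncoprime (r : ℕ) (hr : 2 ≤ r)
    (l : Fin (r + 1) → ℕ) (hl : ∀ i, 0 < l i)
    (h : ∑ i, (bOmit l i : ℚ) / (l i : ℚ)
        = (r : ℚ) - 1 + 2 * (bbar l : ℚ) / ∏ i, (l i : ℚ)) :
    {i : Fin (r + 1) | ∃ j, j ≠ i ∧ 1 < Nat.gcd (l i) (l j)}.ncard ≤ 3 ∧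
    ∃ i j k : Fin (r + 1), i ≤ j ∧ j ≤ k ∧
      ∀ u v : Fin (r + 1), u ≠ v → v ∉ ({i, j, k} : Set (Fin (r + 1))) →
        Nat.gcd (l u) (l v) = 1 := by
  classical
  have hn : 2 ≤ r + 1 := by omega
  set P : Fin (r + 1) → Prop := fun i => ∃ j, j ≠ i ∧ 1 < Nat.gcd (l i) (l j) with hPdef
  set F : Finset (Fin (r + 1)) := Finset.univ.filter P with hFdef
  -- per-term bounds
  have hb_le : ∀ i : Fin (r + 1), bOmit l i ≤ l i := by
    intro i
    refine Nat.le_of_dvd (hl i) (dvd_trans ⟨Nat.gcd (l i) _, rfl⟩ (key_dvd hn l hl i))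
  have hb2_le : ∀ i : Fin (r + 1), P i → 2 * bOmit l i ≤ l i := by
    intro i ⟨j, hji, hgcd⟩
    have hjL : l j ∣ (Finset.univ.erase i).lcm l :=
      Finset.dvd_lcm (Finset.mem_erase.mpr ⟨hji, Finset.mem_univ j⟩)
    have hg : Nat.gcd (l i) (l j) ∣ Nat.gcd (l i) ((Finset.univ.erase i).lcm l) :=
      Nat.dvd_gcd (Nat.gcd_dvd_left _ _) ((Nat.gcd_dvd_right _ _).trans hjL)
    have hgpos : 0 < Nat.gcd (l i) ((Finset.univ.erase i).lcm l) :=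
      Nat.gcd_pos_of_pos_left _ (hl i)
    have h2g : 2 ≤ Nat.gcd (l i) ((Finset.univ.erase i).lcm l) :=
      le_trans hgcd (Nat.le_of_dvd hgpos hg)
    calc 2 * bOmit l i ≤ Nat.gcd (l i) ((Finset.univ.erase i).lcm l) * bOmit l i :=
          Nat.mul_le_mul_right _ h2g
    _ = bOmit l i * Nat.gcd (l i) ((Finset.univ.erase i).lcm l) := mul_comm _ _
    _ ≤ l i := Nat.le_of_dvd (hl i) (key_dvd hn l hl i)
  have hterm : ∀ i ∈ Finset.univ, (bOmit l i : ℚ) / (l i : ℚ) ≤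
      (if P i then (1 / 2 : ℚ) else 1) := by
    intro i _
    have hlpos : (0 : ℚ) < (l i : ℚ) := by exact_mod_cast hl i
    by_cases hPi : P i
    · rw [if_pos hPi, div_le_iff₀ hlpos]
      have := hb2_le i hPi
      have : (2 * bOmit l i : ℚ) ≤ (l i : ℚ) := by exact_mod_cast this
      linarith
    · rw [if_neg hPi, div_le_one hlpos]
      exact_mod_cast hb_le i
  have hsum : ∑ i, (bOmit l i : ℚ) / (l i : ℚ) ≤
      ∑ i, (if P i then (1 / 2 : ℚ) else 1) := Finset.sum_le_sum hterm
  have hsumite : ∑ i, (if P i then (1 / 2 : ℚ) else 1)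
      = (F.card : ℚ) * (1 / 2) + ((Finset.univ.filter fun i => ¬ P i).card : ℚ) := by
    rw [Finset.sum_ite]
    simp [hFdef, mul_comm]
  have hcards : F.card + (Finset.univ.filter fun i => ¬ P i).card = r + 1 := by
    rw [hFdef]
    simpa using Finset.card_filter_add_card_filter_not (s := Finset.univ) P
  -- positivity of the extra term
  have hprod : (0 : ℚ) < ∏ i, (l i : ℚ) := by
    apply Finset.prod_pos
    intro i _
    exact_mod_cast hl i
  have hbbar : (0 : ℚ) < (bbar l : ℚ) := by exact_mod_cast bbar_pos l hl
  have hpos : (0 : ℚ) < 2 * (bbar l : ℚ) / ∏ i, (l i : ℚ) := by positivity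
  -- derive card bound
  have hcardlt : F.card < 4 := by
    by_contra hc
    push_neg at hc
    have h4 : (4 : ℚ) ≤ (F.card : ℚ) := by exact_mod_cast hc
    have hc2 : ((Finset.univ.filter fun i => ¬ P i).card : ℚ) = (r : ℚ) + 1 - (F.card : ℚ) := by
      have hq : (F.card : ℚ) + ((Finset.univ.filter fun i => ¬ P i).card : ℚ) = (r : ℚ) + 1 := by
        exact_mod_cast hcards
      linarith
    rw [h, hsumite, hc2] at hsum
    linarith
  have hcardF : F.card ≤ 3 := by omega
  have hncard : {i : Fin (r + 1) | ∃ j, j ≠ i ∧ 1 < Nat.gcd (l i) (l j)}.ncard = F.card := by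
    rw [Set.ncard_eq_toFinset_card']
    congr 1
    rw [hFdef]
    convert Set.toFinset_setOf P using 2
  refine ⟨by rw [hncard]; exact hcardF, ?_⟩
  obtain ⟨G, hFG, hG3⟩ := Finset.exists_superset_card_eq hcardF
    (by rw [Fintype.card_fin]; omega)
  obtain ⟨a, b, c, -, -, -, rfl⟩ := Finset.card_eq_three.mp hG3
  obtain ⟨i, j, k, hij, hjk, hperm⟩ := sort3 a b c
  refine ⟨i, j, k, hij, hjk, ?_⟩
  intro u v huv hv
  have hvP : ¬ P v := by
    intro hPv
    have hvF : v ∈ F := by rw [hFdef]; exact Finset.mem_filter.mpr ⟨Finset.mem_univ v, hPv⟩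
    have hvG := hFG hvF
    simp only [Finset.mem_insert, Finset.mem_singleton] at hvG
    have := hperm v hvG
    apply hv
    simp only [Set.mem_insert_iff, Set.mem_singleton_iff]
    exact this
  have h1 : Nat.gcd (l v) (l u) ≤ 1 := by
    by_contra hgt
    exact hvP ⟨u, huv, by omega⟩
  have h2 : 0 < Nat.gcd (l v) (l u) := Nat.gcd_pos_of_pos_left _ (hl v)
  rw [Nat.gcd_comm]
  omega
end

section
/- Let r ≥ 2 and let 𝔩_0, …, 𝔩_r be positive integers such that there exists a platonic tuple (a_0, …, a_r) with 𝔩_i dividing a_i for every i. Then one of the following holds: (i) gcd(𝔩_u, 𝔩_v) = 1 for all 0 ≤ u < v ≤ r; (ii) there exist 0 ≤ i < j ≤ r with gcd(𝔩_i, 𝔩_j) > 1 and gcd(𝔩_u, 𝔩_v) = 1 for every other pair u < v; (iii) there exist 0 ≤ i < j < k ≤ r with gcd(𝔩_i, 𝔩_j) = gcd(𝔩_i, 𝔩_k) = gcd(𝔩_j, 𝔩_k) = 2 and gcd(𝔩_u, 𝔩_v) = 1 for every pair u < v not contained in {i, j, k}. -/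
/-- If each `𝔩_i` divides the `i`-th entry of some platonic tuple, then the `𝔩_i`
satisfy one of the three coprimality constellations of the paper's Corollary 5.5. -/
theorem platonic_divisors_coprimality (r : ℕ) (hr : 2 ≤ r)
    (l : Fin (r + 1) → ℕ) (hl : ∀ i, 0 < l i)
    (hdvd : ∃ a : Fin (r + 1) → ℕ, IsPlatonicTuple a ∧ ∀ i, l i ∣ a i) :
    (∀ u v : Fin (r + 1), u < v → Nat.gcd (l u) (l v) = 1) ∨
    (∃ i j : Fin (r + 1), i < j ∧ 1 < Nat.gcd (l i) (l j) ∧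
        ∀ u v : Fin (r + 1), u < v → ¬(u = i ∧ v = j) →
          Nat.gcd (l u) (l v) = 1) ∨
    (∃ i j k : Fin (r + 1), i < j ∧ j < k ∧
        Nat.gcd (l i) (l j) = 2 ∧ Nat.gcd (l i) (l k) = 2 ∧
        Nat.gcd (l j) (l k) = 2 ∧
        ∀ u v : Fin (r + 1), u < v →
          ¬(u ∈ ({i, j, k} : Set (Fin (r + 1))) ∧
            v ∈ ({i, j, k} : Set (Fin (r + 1)))) →
          Nat.gcd (l u) (l v) = 1) := by
  obtain ⟨a, ⟨σ, hsort, htriple, htail⟩, hdvd⟩ := hdvd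
  have h0 : 0 < r + 1 := by omega
  have h1 : 1 < r + 1 := by omega
  have h2 : 2 < r + 1 := by omega
  rw [dif_pos h0, dif_pos h1, dif_pos h2] at htriple
  set i0 := σ ⟨0, h0⟩ with hi0
  set i1 := σ ⟨1, h1⟩ with hi1
  set i2 := σ ⟨2, h2⟩ with hi2
  have d01 : i0 ≠ i1 := fun h => by simpa [Fin.ext_iff] using σ.injective h
  have d02 : i0 ≠ i2 := fun h => by simpa [Fin.ext_iff] using σ.injective h
  have d12 : i1 ≠ i2 := fun h => by simpa [Fin.ext_iff] using σ.injective h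
  -- entries outside the first three sorted positions are 1
  have hA : ∀ t : Fin (r + 1), t ≠ i0 → t ≠ i1 → t ≠ i2 → l t = 1 := by
    intro t ht0 ht1 ht2
    have hk : 3 ≤ ((σ.symm t : Fin (r + 1)) : ℕ) := by
      by_contra hlt
      push_neg at hlt
      have hval : ((σ.symm t : Fin (r + 1)) : ℕ) = 0 ∨ ((σ.symm t : Fin (r + 1)) : ℕ) = 1 ∨
          ((σ.symm t : Fin (r + 1)) : ℕ) = 2 := by omega
      rcases hval with h | h | h
      · exact ht0 (by rw [← Equiv.apply_symm_apply σ t, show σ.symm t = ⟨0, h0⟩ from Fin.ext h])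
      · exact ht1 (by rw [← Equiv.apply_symm_apply σ t, show σ.symm t = ⟨1, h1⟩ from Fin.ext h])
      · exact ht2 (by rw [← Equiv.apply_symm_apply σ t, show σ.symm t = ⟨2, h2⟩ from Fin.ext h])
    have ha : a t = 1 := by
      have h := htail (σ.symm t) hk
      rwa [Equiv.apply_symm_apply] at h
    exact Nat.dvd_one.mp (ha ▸ hdvd t)
  have hg : ∀ u v, Nat.gcd (l u) (l v) ∣ Nat.gcd (a u) (a v) := fun u v =>
    Nat.dvd_gcd ((Nat.gcd_dvd_left _ _).trans (hdvd u)) ((Nat.gcd_dvd_right _ _).trans (hdvd v))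
  have hgpos : ∀ u v, 0 < Nat.gcd (l u) (l v) := fun u v =>
    Nat.gcd_pos_of_pos_left _ (hl u)
  -- every pairwise gcd either is 1 or is one of the three gcds among i0, i1, i2
  have hcover : ∀ u v : Fin (r + 1), u ≠ v → Nat.gcd (l u) (l v) = 1 ∨
      (Nat.gcd (l u) (l v) = Nat.gcd (l i0) (l i1) ∧ ((u = i0 ∧ v = i1) ∨ (u = i1 ∧ v = i0))) ∨
      (Nat.gcd (l u) (l v) = Nat.gcd (l i0) (l i2) ∧ ((u = i0 ∧ v = i2) ∨ (u = i2 ∧ v = i0))) ∨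
      (Nat.gcd (l u) (l v) = Nat.gcd (l i1) (l i2) ∧ ((u = i1 ∧ v = i2) ∨ (u = i2 ∧ v = i1))) := by
    intro u v huv
    by_cases hu0 : u = i0
    · by_cases hv1 : v = i1
      · exact Or.inr (Or.inl ⟨by rw [hu0, hv1], Or.inl ⟨hu0, hv1⟩⟩)
      by_cases hv2 : v = i2
      · exact Or.inr (Or.inr (Or.inl ⟨by rw [hu0, hv2], Or.inl ⟨hu0, hv2⟩⟩))
      · have hv0 : v ≠ i0 := fun h => huv (hu0.trans h.symm)
        exact Or.inl (by rw [hA v hv0 hv1 hv2, Nat.gcd_one_right])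
    by_cases hu1 : u = i1
    · by_cases hv0 : v = i0
      · exact Or.inr (Or.inl ⟨by rw [hu1, hv0, Nat.gcd_comm], Or.inr ⟨hu1, hv0⟩⟩)
      by_cases hv2 : v = i2
      · exact Or.inr (Or.inr (Or.inr ⟨by rw [hu1, hv2], Or.inl ⟨hu1, hv2⟩⟩))
      · have hv1 : v ≠ i1 := fun h => huv (hu1.trans h.symm)
        exact Or.inl (by rw [hA v hv0 hv1 hv2, Nat.gcd_one_right])
    by_cases hu2 : u = i2
    · by_cases hv0 : v = i0
      · exact Or.inr (Or.inr (Or.inl ⟨by rw [hu2, hv0, Nat.gcd_comm], Or.inr ⟨hu2, hv0⟩⟩))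
      by_cases hv1 : v = i1
      · exact Or.inr (Or.inr (Or.inr ⟨by rw [hu2, hv1, Nat.gcd_comm], Or.inr ⟨hu2, hv1⟩⟩))
      · have hv2 : v ≠ i2 := fun h => huv (hu2.trans h.symm)
        exact Or.inl (by rw [hA v hv0 hv1 hv2, Nat.gcd_one_right])
    · exact Or.inl (by rw [hA u hu0 hu1 hu2, Nat.gcd_one_left])
  -- closer for constellation (i)
  have close1 : Nat.gcd (l i0) (l i1) = 1 → Nat.gcd (l i0) (l i2) = 1 →
      Nat.gcd (l i1) (l i2) = 1 → ∀ u v : Fin (r + 1), u < v → Nat.gcd (l u) (l v) = 1 := by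
    intro h01 h02 h12 u v huv
    rcases hcover u v huv.ne with h | ⟨h, _⟩ | ⟨h, _⟩ | ⟨h, _⟩ <;> omega
  -- closer for constellation (ii)
  have close2 : ∀ p q : Fin (r + 1), p ≠ q → 1 < Nat.gcd (l p) (l q) →
      (∀ u v : Fin (r + 1), u ≠ v → ¬((u = p ∧ v = q) ∨ (u = q ∧ v = p)) →
        Nat.gcd (l u) (l v) = 1) →
      ∃ i j : Fin (r + 1), i < j ∧ 1 < Nat.gcd (l i) (l j) ∧
        ∀ u v : Fin (r + 1), u < v → ¬(u = i ∧ v = j) → Nat.gcd (l u) (l v) = 1 := by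
    intro p q hpq hgt hrest
    rcases lt_or_gt_of_ne hpq with h | h
    · refine ⟨p, q, h, hgt, fun u v huv hne => hrest u v huv.ne ?_⟩
      rintro (⟨rfl, rfl⟩ | ⟨rfl, rfl⟩)
      · exact hne ⟨rfl, rfl⟩
      · exact absurd huv (lt_asymm h)
    · refine ⟨q, p, h, by rwa [Nat.gcd_comm], fun u v huv hne => hrest u v huv.ne ?_⟩
      rintro (⟨rfl, rfl⟩ | ⟨rfl, rfl⟩)
      · exact absurd huv (lt_asymm h)
      · exact hne ⟨rfl, rfl⟩
  -- closer for constellation (iii)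
  have close3 : Nat.gcd (l i0) (l i1) = 2 → Nat.gcd (l i0) (l i2) = 2 →
      Nat.gcd (l i1) (l i2) = 2 →
      ∃ i j k : Fin (r + 1), i < j ∧ j < k ∧
        Nat.gcd (l i) (l j) = 2 ∧ Nat.gcd (l i) (l k) = 2 ∧ Nat.gcd (l j) (l k) = 2 ∧
        ∀ u v : Fin (r + 1), u < v →
          ¬(u ∈ ({i, j, k} : Set (Fin (r + 1))) ∧ v ∈ ({i, j, k} : Set (Fin (r + 1)))) →
          Nat.gcd (l u) (l v) = 1 := by
    intro h01 h02 h12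
    have hpair : ∀ u v : Fin (r + 1), (u = i0 ∨ u = i1 ∨ u = i2) →
        (v = i0 ∨ v = i1 ∨ v = i2) → u ≠ v → Nat.gcd (l u) (l v) = 2 := by
      rintro u v (rfl | rfl | rfl) (rfl | rfl | rfl) hne <;>
        first
          | exact absurd rfl hne
          | assumption
          | (rw [Nat.gcd_comm]; assumption)
    obtain ⟨i, j, k, hij, hjk, hi, hj, hk, hout⟩ :
        ∃ i j k : Fin (r + 1), i < j ∧ j < k ∧ (i = i0 ∨ i = i1 ∨ i = i2) ∧
          (j = i0 ∨ j = i1 ∨ j = i2) ∧ (k = i0 ∨ k = i1 ∨ k = i2) ∧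
          ∀ t : Fin (r + 1), t ≠ i → t ≠ j → t ≠ k → l t = 1 := by
      rcases lt_trichotomy i0 i1 with hab | hab | hab
      · rcases lt_trichotomy i1 i2 with hbc | hbc | hbc
        · exact ⟨i0, i1, i2, hab, hbc, by tauto, by tauto, by tauto, fun t a b c => hA t a b c⟩
        · exact absurd hbc d12
        · rcases lt_trichotomy i0 i2 with hac | hac | hac
          · exact ⟨i0, i2, i1, hac, hbc, by tauto, by tauto, by tauto, fun t a b c => hA t a c b⟩
          · exact absurd hac d02
          · exact ⟨i2, i0, i1, hac, hab, by tauto, by tauto, by tauto, fun t a b c => hA t b c a⟩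
      · exact absurd hab d01
      · rcases lt_trichotomy i0 i2 with hac | hac | hac
        · exact ⟨i1, i0, i2, hab, hac, by tauto, by tauto, by tauto, fun t a b c => hA t b a c⟩
        · exact absurd hac d02
        · rcases lt_trichotomy i1 i2 with hbc | hbc | hbc
          · exact ⟨i1, i2, i0, hbc, hac, by tauto, by tauto, by tauto, fun t a b c => hA t c a b⟩
          · exact absurd hbc d12
          · exact ⟨i2, i1, i0, hbc, hab, by tauto, by tauto, by tauto, fun t a b c => hA t c b a⟩
    refine ⟨i, j, k, hij, hjk, hpair _ _ hi hj hij.ne, hpair _ _ hi hk (hij.trans hjk).ne,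
      hpair _ _ hj hk hjk.ne, ?_⟩
    intro u v huv hnot
    simp only [Set.mem_insert_iff, Set.mem_singleton_iff, not_and_or, not_or] at hnot
    rcases hnot with ⟨hu1, hu2, hu3⟩ | ⟨hv1, hv2, hv3⟩
    · rw [hout u hu1 hu2 hu3, Nat.gcd_one_left]
    · rw [hout v hv1 hv2 hv3, Nat.gcd_one_right]
  -- now the case analysis on the platonic triple
  rcases htriple with ⟨hx, hy, hz⟩ | ⟨hx, hy, hz⟩ | ⟨hx, hy, hz⟩ | ⟨hx, hy, hz⟩ | ⟨hx, hy, hz⟩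
  · -- (5, 3, 2)
    have h01 : Nat.gcd (l i0) (l i1) = 1 := by
      have h := hg i0 i1; rw [hx, hy, show Nat.gcd 5 3 = 1 from by decide] at h
      exact Nat.dvd_one.mp h
    have h02 : Nat.gcd (l i0) (l i2) = 1 := by
      have h := hg i0 i2; rw [hx, hz, show Nat.gcd 5 2 = 1 from by decide] at h
      exact Nat.dvd_one.mp h
    have h12 : Nat.gcd (l i1) (l i2) = 1 := by
      have h := hg i1 i2; rw [hy, hz, show Nat.gcd 3 2 = 1 from by decide] at h
      exact Nat.dvd_one.mp h
    exact Or.inl (close1 h01 h02 h12)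
  · -- (4, 3, 2)
    have h01 : Nat.gcd (l i0) (l i1) = 1 := by
      have h := hg i0 i1; rw [hx, hy, show Nat.gcd 4 3 = 1 from by decide] at h
      exact Nat.dvd_one.mp h
    have h12 : Nat.gcd (l i1) (l i2) = 1 := by
      have h := hg i1 i2; rw [hy, hz, show Nat.gcd 3 2 = 1 from by decide] at h
      exact Nat.dvd_one.mp h
    by_cases h02 : Nat.gcd (l i0) (l i2) = 1
    · exact Or.inl (close1 h01 h02 h12)
    · have hgt : 1 < Nat.gcd (l i0) (l i2) := by have := hgpos i0 i2; omega
      refine Or.inr (Or.inl (close2 i0 i2 d02 hgt fun u v huv hne => ?_))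
      rcases hcover u v huv with h | ⟨h, _⟩ | ⟨h, hc⟩ | ⟨h, _⟩
      · exact h
      · omega
      · exact absurd hc hne
      · omega
  · -- (3, 3, 2)
    have h02 : Nat.gcd (l i0) (l i2) = 1 := by
      have h := hg i0 i2; rw [hx, hz, show Nat.gcd 3 2 = 1 from by decide] at h
      exact Nat.dvd_one.mp h
    have h12 : Nat.gcd (l i1) (l i2) = 1 := by
      have h := hg i1 i2; rw [hy, hz, show Nat.gcd 3 2 = 1 from by decide] at h
      exact Nat.dvd_one.mp h
    by_cases h01 : Nat.gcd (l i0) (l i1) = 1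
    · exact Or.inl (close1 h01 h02 h12)
    · have hgt : 1 < Nat.gcd (l i0) (l i1) := by have := hgpos i0 i1; omega
      refine Or.inr (Or.inl (close2 i0 i1 d01 hgt fun u v huv hne => ?_))
      rcases hcover u v huv with h | ⟨h, hc⟩ | ⟨h, _⟩ | ⟨h, _⟩
      · exact h
      · exact absurd hc hne
      · omega
      · omega
  · -- (x, 2, 2)
    have e01 : Nat.gcd (l i0) (l i1) ∣ 2 := by
      have h := hg i0 i1; rw [hy] at h; exact h.trans (Nat.gcd_dvd_right _ _)
    have e02 : Nat.gcd (l i0) (l i2) ∣ 2 := by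
      have h := hg i0 i2; rw [hz] at h; exact h.trans (Nat.gcd_dvd_right _ _)
    have e12 : Nat.gcd (l i1) (l i2) ∣ 2 := by
      have h := hg i1 i2; rw [hy, hz] at h; simpa using h
    have o01 := (Nat.dvd_prime Nat.prime_two).mp e01
    have o02 := (Nat.dvd_prime Nat.prime_two).mp e02
    have o12 := (Nat.dvd_prime Nat.prime_two).mp e12
    rcases o01 with h01 | h01
    · rcases o02 with h02 | h02
      · rcases o12 with h12 | h12
        · exact Or.inl (close1 h01 h02 h12)
        · refine Or.inr (Or.inl (close2 i1 i2 d12 (by omega) fun u v huv hne => ?_))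
          rcases hcover u v huv with h | ⟨h, _⟩ | ⟨h, _⟩ | ⟨h, hc⟩
          · exact h
          · omega
          · omega
          · exact absurd hc hne
      · -- h01 = 1, h02 = 2 : then h12 = 1
        have h12 : Nat.gcd (l i1) (l i2) = 1 := by
          rcases o12 with h | h
          · exact h
          · exfalso
            have d1 : 2 ∣ l i0 := h02 ▸ Nat.gcd_dvd_left _ _
            have d2 : 2 ∣ l i1 := h ▸ Nat.gcd_dvd_left _ _
            have hd : 2 ∣ Nat.gcd (l i0) (l i1) := Nat.dvd_gcd d1 d2
            omega
        refine Or.inr (Or.inl (close2 i0 i2 d02 (by omega) fun u v huv hne => ?_))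
        rcases hcover u v huv with h | ⟨h, _⟩ | ⟨h, hc⟩ | ⟨h, _⟩
        · exact h
        · omega
        · exact absurd hc hne
        · omega
    · -- h01 = 2
      rcases o02 with h02 | h02
      · -- h02 = 1 : then h12 = 1
        have h12 : Nat.gcd (l i1) (l i2) = 1 := by
          rcases o12 with h | h
          · exact h
          · exfalso
            have d1 : 2 ∣ l i0 := h01 ▸ Nat.gcd_dvd_left _ _
            have d2 : 2 ∣ l i2 := h ▸ Nat.gcd_dvd_right _ _
            have hd : 2 ∣ Nat.gcd (l i0) (l i2) := Nat.dvd_gcd d1 d2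
            omega
        refine Or.inr (Or.inl (close2 i0 i1 d01 (by omega) fun u v huv hne => ?_))
        rcases hcover u v huv with h | ⟨h, hc⟩ | ⟨h, _⟩ | ⟨h, _⟩
        · exact h
        · exact absurd hc hne
        · omega
        · omega
      · -- h01 = 2, h02 = 2 : then h12 = 2, constellation (iii)
        have h12 : Nat.gcd (l i1) (l i2) = 2 := by
          have d1 : 2 ∣ l i1 := h01 ▸ Nat.gcd_dvd_right _ _
          have d2 : 2 ∣ l i2 := h02 ▸ Nat.gcd_dvd_right _ _
          exact Nat.dvd_antisymm e12 (Nat.dvd_gcd d1 d2)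
        exact Or.inr (Or.inr (close3 h01 h02 h12))
  · -- (x, y, 1)
    have hl2 : l i2 = 1 := Nat.dvd_one.mp (hz ▸ hdvd i2)
    have h02 : Nat.gcd (l i0) (l i2) = 1 := by rw [hl2, Nat.gcd_one_right]
    have h12 : Nat.gcd (l i1) (l i2) = 1 := by rw [hl2, Nat.gcd_one_right]
    by_cases h01 : Nat.gcd (l i0) (l i1) = 1
    · exact Or.inl (close1 h01 h02 h12)
    · have hgt : 1 < Nat.gcd (l i0) (l i1) := by have := hgpos i0 i1; omega
      refine Or.inr (Or.inl (close2 i0 i1 d01 hgt fun u v huv hne => ?_))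
      rcases hcover u v huv with h | ⟨h, hc⟩ | ⟨h, _⟩ | ⟨h, _⟩
      · exact h
      · exact absurd hc hne
      · omega
      · omega
end

section
/- Let 𝔩_0, 𝔩_1, 𝔩_2 be positive integers with gcd(𝔩_1, 𝔩_2) = gcd(𝔩_0, 𝔩_1, 𝔩_2). Then gcd(𝔩_0·𝔩_1, 𝔩_0·𝔩_2, 𝔩_1·𝔩_2) = gcd(𝔩_0, 𝔩_1) · gcd(𝔩_0, 𝔩_2). -/
/-! Expanding the product, `gcd(𝔩_0, 𝔩_1) · gcd(𝔩_0, 𝔩_2) = gcd(𝔩_0², 𝔩_0𝔩_1, 𝔩_0𝔩_2, 𝔩_1𝔩_2)`,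
so it suffices that `gcd(𝔩_0𝔩_1, 𝔩_0𝔩_2, 𝔩_1𝔩_2)` divides `𝔩_0²`. It divides
`𝔩_0 · gcd(𝔩_1, 𝔩_2)`, and the hypothesis says exactly that `gcd(𝔩_1, 𝔩_2) ∣ 𝔩_0`. -/

namespace Nat

theorem gcd_mul_gcd (a b c d : ℕ) :
    gcd a b * gcd c d = gcd (gcd (a * c) (a * d)) (gcd (b * c) (b * d)) := by
  rw [← Nat.gcd_mul_right, ← Nat.gcd_mul_left, ← Nat.gcd_mul_left]

theorem gcd_pairwise_mul_dvd_mul_gcd (a b c : ℕ) :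
    gcd (a * b) (gcd (a * c) (b * c)) ∣ a * gcd b c := by
  rw [← Nat.gcd_mul_left]
  exact Nat.dvd_gcd (Nat.gcd_dvd_left _ _) ((Nat.gcd_dvd_right _ _).trans (Nat.gcd_dvd_left _ _))

end Nat

theorem gcd_of_pairwise_products_general (l0 l1 l2 : ℕ)
    (h : Nat.gcd l1 l2 = Nat.gcd l0 (Nat.gcd l1 l2)) :
    Nat.gcd (l0 * l1) (Nat.gcd (l0 * l2) (l1 * l2))
      = Nat.gcd l0 l1 * Nat.gcd l0 l2 := by
  set X := Nat.gcd (l0 * l1) (Nat.gcd (l0 * l2) (l1 * l2))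
  have hX01 : X ∣ l0 * l1 := Nat.gcd_dvd_left _ _
  have hX02 : X ∣ l0 * l2 := (Nat.gcd_dvd_right _ _).trans (Nat.gcd_dvd_left _ _)
  have hX12 : X ∣ l1 * l2 := (Nat.gcd_dvd_right _ _).trans (Nat.gcd_dvd_right _ _)
  have hX00 : X ∣ l0 * l0 :=
    (Nat.gcd_pairwise_mul_dvd_mul_gcd l0 l1 l2).trans
      (Nat.mul_dvd_mul_left l0 (h ▸ Nat.gcd_dvd_left l0 _))
  refine Nat.dvd_antisymm ?_ ?_
  · rw [Nat.gcd_mul_gcd]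
    exact Nat.dvd_gcd (Nat.dvd_gcd hX00 hX02) (Nat.dvd_gcd (mul_comm l0 l1 ▸ hX01) hX12)
  · refine Nat.dvd_gcd ?_ (Nat.dvd_gcd ?_ ?_)
    · rw [mul_comm l0 l1]
      exact Nat.mul_dvd_mul (Nat.gcd_dvd_right _ _) (Nat.gcd_dvd_left _ _)
    · exact Nat.mul_dvd_mul (Nat.gcd_dvd_left _ _) (Nat.gcd_dvd_right _ _)
    · exact Nat.mul_dvd_mul (Nat.gcd_dvd_right _ _) (Nat.gcd_dvd_right _ _)

/-- If `gcd(𝔩_1, 𝔩_2) = gcd(𝔩_0, 𝔩_1, 𝔩_2)`, then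
`gcd(𝔩_0𝔩_1, 𝔩_0𝔩_2, 𝔩_1𝔩_2) = gcd(𝔩_0, 𝔩_1)·gcd(𝔩_0, 𝔩_2)`. -/
theorem gcd_of_pairwise_products (l0 l1 l2 : ℕ)
    (h0 : 0 < l0) (h1 : 0 < l1) (h2 : 0 < l2)
    (h : Nat.gcd l1 l2 = Nat.gcd l0 (Nat.gcd l1 l2)) :
    Nat.gcd (l0 * l1) (Nat.gcd (l0 * l2) (l1 * l2))
      = Nat.gcd l0 l1 * Nat.gcd l0 l2 :=
  gcd_of_pairwise_products_general l0 l1 l2 h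
end

section
/- Let a_0, a_1, a_2 be positive integers with gcd(a_1, a_2) = gcd(a_0, a_1, a_2), and set g_1 = gcd(a_0, a_1) and g_2 = gcd(a_0, a_2). Then the quotient of ℤ³ by the subgroup generated by the two vectors (−a_0/g_1, a_1/g_1, 0) and (−a_0/g_2, 0, a_2/g_2) is a torsion-free abelian group. -/
/-!
Write `qᵢ = aᵢ / gᵢ` and `pᵢ = a₀ / gᵢ`. The two generators are orthogonal to their cross product
`(q₁q₂, p₁q₂, q₁p₂)`, and they span the whole kernel of the dot product with it because `pᵢ` is
coprime to `qᵢ` and, as `gcd(a₁, a₂) ∣ a₀`, `q₁` is coprime to `q₂`. So the quotient embeds in `ℤ`.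
-/

open Matrix Submodule

instance LinearMap.isAddTorsionFree_quotient_ker {R M N : Type*} [Ring R] [AddCommGroup M]
    [Module R M] [AddCommGroup N] [Module R N] [IsAddTorsionFree N] (f : M →ₗ[R] N) :
    IsAddTorsionFree (M ⧸ LinearMap.ker f) :=
  Function.Injective.isAddTorsionFree ((LinearMap.ker f).liftQ f le_rfl).toAddMonoidHom <|
    LinearMap.ker_eq_bot.mp <| ker_liftQ_eq_bot _ _ _ le_rfl

theorem Nat.coprime_div_gcd_div_gcd_of_gcd_dvd {a b c : ℕ} (ha : a ≠ 0) (h : b.gcd c ∣ a) :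
    Coprime (b / a.gcd b) (c / a.gcd c) := by
  set g := (a.gcd b).gcd (a.gcd c)
  have hg : 0 < g := Nat.pos_of_ne_zero (Nat.gcd_ne_zero_left (Nat.gcd_ne_zero_left ha))
  have hbc : b.gcd c ∣ g :=
    Nat.dvd_gcd (Nat.dvd_gcd h (Nat.gcd_dvd_left b c)) (Nat.dvd_gcd h (Nat.gcd_dvd_right b c))
  have hb : (b / a.gcd b).gcd (c / a.gcd c) * g ∣ b := by
    calc _ ∣ b / a.gcd b * a.gcd b := Nat.mul_dvd_mul (Nat.gcd_dvd_left _ _) (Nat.gcd_dvd_left _ _)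
      _ = b := Nat.div_mul_cancel (Nat.gcd_dvd_right a b)
  have hc : (b / a.gcd b).gcd (c / a.gcd c) * g ∣ c := by
    calc _ ∣ c / a.gcd c * a.gcd c := Nat.mul_dvd_mul (Nat.gcd_dvd_right _ _) (Nat.gcd_dvd_right _ _)
      _ = c := Nat.div_mul_cancel (Nat.gcd_dvd_right a c)
  exact Nat.dvd_one.mp <| (Nat.mul_dvd_mul_iff_right hg).mp <| by
    rw [one_mul]; exact (Nat.dvd_gcd hb hc).trans hbc

theorem span_pair_eq_ker_dotProduct_cross {R : Type*} [CommRing R] [IsDomain R]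
    {p₁ q₁ p₂ q₂ : R} (hq₁ : q₁ ≠ 0) (hq₂ : q₂ ≠ 0) (h₁ : IsCoprime q₁ p₁)
    (h₂ : IsCoprime q₂ p₂) (hq : IsCoprime q₁ q₂) :
    span R {![-p₁, q₁, 0], ![-p₂, 0, q₂]} =
      LinearMap.ker (dotProductBilin R R (![-p₁, q₁, 0] ⨯₃ ![-p₂, 0, q₂])) := by
  refine le_antisymm (span_le.mpr ?_) fun x hx => ?_
  · rintro v (rfl | rfl) <;> rw [SetLike.mem_coe, LinearMap.mem_ker, dotProductBilin_apply_apply,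
      dotProduct_comm]
    exacts [dot_self_cross _ _, dot_cross_self _ _]
  have hx : q₁ * q₂ * x 0 + p₁ * q₂ * x 1 + q₁ * p₂ * x 2 = 0 := by
    rw [LinearMap.mem_ker, dotProductBilin_apply_apply, cross_apply, dotProduct,
      Fin.sum_univ_three] at hx
    simpa using hx
  obtain ⟨c, hc⟩ : q₁ ∣ x 1 := hq.dvd_of_dvd_mul_left <|
    h₁.dvd_of_dvd_mul_left ⟨-(q₂ * x 0 + p₂ * x 2), by linear_combination hx⟩
  obtain ⟨d, hd⟩ : q₂ ∣ x 2 := hq.symm.dvd_of_dvd_mul_left <|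
    h₂.dvd_of_dvd_mul_left ⟨-(q₁ * x 0 + p₁ * x 1), by linear_combination hx⟩
  have h₀ : x 0 = -(p₁ * c) - p₂ * d := by
    refine mul_left_cancel₀ (mul_ne_zero hq₁ hq₂) ?_
    linear_combination hx - p₁ * q₂ * hc - q₁ * p₂ * hd
  refine mem_span_pair.mpr ⟨c, d, funext fun i => ?_⟩
  fin_cases i <;> simp [h₀, hc, hd, mul_comm, sub_eq_add_neg]

/-- If `gcd(a_1, a_2) = gcd(a_0, a_1, a_2)` and `g_1 = gcd(a_0, a_1)`,
`g_2 = gcd(a_0, a_2)`, then the quotient of `ℤ³` by the subgroup generated by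
`(−a_0/g_1, a_1/g_1, 0)` and `(−a_0/g_2, 0, a_2/g_2)` is torsion-free. -/
theorem quotient_by_row_lattice_torsionFree (a0 a1 a2 : ℕ)
    (h0 : 0 < a0) (h1 : 0 < a1) (h2 : 0 < a2)
    (h : Nat.gcd a1 a2 = Nat.gcd a0 (Nat.gcd a1 a2))
    (g1 g2 : ℕ) (hg1 : g1 = Nat.gcd a0 a1) (hg2 : g2 = Nat.gcd a0 a2) :
    ∀ g : ((Fin 3 → ℤ) ⧸ Submodule.span ℤ
        ({![-((a0 / g1 : ℕ) : ℤ), ((a1 / g1 : ℕ) : ℤ), 0],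
          ![-((a0 / g2 : ℕ) : ℤ), 0, ((a2 / g2 : ℕ) : ℤ)]} : Set (Fin 3 → ℤ))),
      g ≠ 0 → ¬IsOfFinAddOrder g := by
  subst hg1 hg2
  have hg₁ : 0 < a0.gcd a1 := Nat.gcd_pos_of_pos_left _ h0
  have hg₂ : 0 < a0.gcd a2 := Nat.gcd_pos_of_pos_left _ h0
  have hq₁ : a1 / a0.gcd a1 ≠ 0 := (Nat.div_pos (Nat.gcd_le_right _ h1) hg₁).ne'
  have hq₂ : a2 / a0.gcd a2 ≠ 0 := (Nat.div_pos (Nat.gcd_le_right _ h2) hg₂).ne'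
  have hq : (a1 / a0.gcd a1).Coprime (a2 / a0.gcd a2) :=
    Nat.coprime_div_gcd_div_gcd_of_gcd_dvd h0.ne' (h ▸ Nat.gcd_dvd_left _ _)
  rw [span_pair_eq_ker_dotProduct_cross (Int.natCast_ne_zero.mpr hq₁) (Int.natCast_ne_zero.mpr hq₂)
    (Nat.isCoprime_iff_coprime.mpr (Nat.coprime_div_gcd_div_gcd hg₁).symm)
    (Nat.isCoprime_iff_coprime.mpr (Nat.coprime_div_gcd_div_gcd hg₂).symm)
    (Nat.isCoprime_iff_coprime.mpr hq)]
  exact fun g hg => not_isOfFinAddOrder_of_isAddTorsionFree hg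
end

section
/- Let r ≥ 1 and s ≥ 0, let a_0, …, a_r be positive integers and let d_0, …, d_r ∈ ℚ^s. Define vectors v_0, …, v_r ∈ ℚ^r × ℚ^s as follows: the first r coordinates of v_0 all equal −a_0, the first r coordinates of v_i (for 1 ≤ i ≤ r) equal a_i in position i and 0 in every other position, and the last s coordinates of v_i equal d_i. Set ℓ_i = ∏_{k ≠ i} a_k and v_τ = Σ_{i=0}^r ℓ_i·v_i. Then the first r coordinates of v_τ all vanish, and the family (v_0, …, v_r) is linearly dependent over ℚ if and only if v_τ = 0. -/
/-- Linear-algebra core of the structure of `P`-elementary cones: with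
`v_0 = (−a_0, …, −a_0, d_0)` and `v_i = (0, …, a_i, …, 0, d_i)` in
`ℚ^r × ℚ^s`, and `ℓ_i = ∏_{k ≠ i} a_k`, the point `v_τ = Σ ℓ_i v_i` has vanishing
first `r` coordinates, and `(v_0, …, v_r)` is linearly dependent over `ℚ` if and
only if `v_τ = 0`. -/
theorem elementary_cone_dependence (r s : ℕ) (hr : 1 ≤ r)
    (a : Fin (r + 1) → ℕ) (ha : ∀ i, 0 < a i)
    (d : Fin (r + 1) → Fin s → ℚ)
    (v : Fin (r + 1) → (Fin r → ℚ) × (Fin s → ℚ))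
    (hv : ∀ i, v i =
      (fun k : Fin r =>
        if i = 0 then -(a 0 : ℚ)
        else if (k : ℕ) + 1 = (i : ℕ) then (a i : ℚ) else 0,
       d i))
    (ell : Fin (r + 1) → ℕ)
    (hell : ∀ i, ell i = ∏ k ∈ Finset.univ.erase i, a k)
    (vτ : (Fin r → ℚ) × (Fin s → ℚ))
    (hτ : vτ = ∑ i, (ell i : ℚ) • v i) :
    vτ.1 = 0 ∧ (¬ LinearIndependent ℚ v ↔ vτ = 0) := by
  -- key computation: first coordinates of any combination
  have key : ∀ (g : Fin (r + 1) → ℚ) (k : Fin r),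
      (∑ i, g i • v i).1 k = g 0 * (-(a 0 : ℚ)) + g k.succ * (a k.succ : ℚ) := by
    intro g k
    have : (∑ i, g i • v i).1 k = ∑ i, g i * (v i).1 k := by
      simp [Prod.fst_sum]
    rw [this, Fin.sum_univ_succ]
    congr 1
    · simp [hv]
    · have : ∀ i : Fin r, g i.succ * (v i.succ).1 k
          = if k = i then g i.succ * (a i.succ : ℚ) else 0 := by
        intro i
        rw [hv]
        simp only [Fin.succ_ne_zero, if_false]
        have hcond : ((k : ℕ) + 1 = (i.succ : ℕ)) ↔ k = i := by
          simp [Fin.val_succ, Fin.ext_iff]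
        by_cases h : k = i
        · simp [hcond, h]
        · rw [if_neg (fun hh => h (hcond.1 hh)), if_neg h, mul_zero]
      simp [this]
  -- ℓ_i * a_i = ∏ a
  have hla : ∀ i, (ell i : ℚ) * (a i : ℚ) = ∏ k, (a k : ℚ) := by
    intro i
    rw [hell i]
    push_cast
    rw [Finset.prod_erase_mul _ _ (Finset.mem_univ i)]
  have hP : (∏ k, (a k : ℚ)) ≠ 0 := by
    apply Finset.prod_ne_zero_iff.2
    intro k _
    exact_mod_cast (ha k).ne'
  have ha' : ∀ i, (a i : ℚ) ≠ 0 := fun i => by exact_mod_cast (ha i).ne'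
  have hzero : vτ.1 = 0 := by
    funext k
    rw [hτ, key]
    simp only [Pi.zero_apply]
    linear_combination hla k.succ - hla 0
  refine ⟨hzero, ?_, ?_⟩
  · -- dependent → vτ = 0
    intro hdep
    rw [Fintype.linearIndependent_iff] at hdep
    push_neg at hdep
    obtain ⟨g, hg, i0, hi0⟩ := hdep
    -- g k.succ * a k.succ = g 0 * a 0 for all k
    have hrel : ∀ k : Fin r, g k.succ * (a k.succ : ℚ) = g 0 * (a 0 : ℚ) := by
      intro k
      have := congrFun (congrArg Prod.fst hg) k
      rw [key] at this
      simp only [Prod.fst_zero, Pi.zero_apply] at this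
      linarith
    have hg0 : g 0 ≠ 0 := by
      intro h0
      apply hi0
      rcases Fin.eq_zero_or_eq_succ i0 with h | ⟨j, rfl⟩
      · rw [h]; exact h0
      · have := hrel j
        rw [h0, zero_mul] at this
        exact (mul_eq_zero.1 this).resolve_right (ha' j.succ)
    set lam : ℚ := g 0 * (a 0 : ℚ) / ∏ k, (a k : ℚ) with hlam
    have hlamne : lam ≠ 0 := by
      apply div_ne_zero (mul_ne_zero hg0 (ha' 0)) hP
    have hgl : ∀ i, g i = lam * (ell i : ℚ) := by
      intro i
      have hgi : g i * (a i : ℚ) = g 0 * (a 0 : ℚ) := by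
        rcases Fin.eq_zero_or_eq_succ i with rfl | ⟨j, rfl⟩
        · rfl
        · exact hrel j
      have h2 : lam * (ell i : ℚ) * (a i : ℚ) = g 0 * (a 0 : ℚ) := by
        rw [mul_assoc, hla i, hlam, div_mul_cancel₀ _ hP]
      exact mul_right_cancel₀ (ha' i) (hgi.trans h2.symm)
    have : lam • vτ = 0 := by
      rw [hτ, Finset.smul_sum]
      rw [← hg]
      congr 1
      funext i
      rw [hgl i, smul_smul]
    rcases smul_eq_zero.1 this with h | h
    · exact absurd h hlamne
    · exact h
  · -- vτ = 0 → dependent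
    intro h0 hind
    rw [Fintype.linearIndependent_iff] at hind
    have := hind (fun i => (ell i : ℚ)) (by rw [← hτ, h0]) 0
    have hl0 : (ell 0 : ℚ) ≠ 0 := by
      intro h
      rw [← hla 0, h, zero_mul] at hP
      exact hP rfl
    exact hl0 this
end

section
/- Let r ≥ 1, let n_0, …, n_r ≥ 1 and let l_i ∈ (ℤ_{>0})^{n_i} for i = 0, …, r; put n = n_0 + … + n_r, let 𝔩_i denote the gcd of the entries of l_i, and let L_i ∈ ℤ^n be the vector whose i-th block equals l_i and whose other blocks are zero. Suppose v ∈ ℤ^n has all coordinates nonnegative and there exist an integer α > 0 and integers β_0, …, β_r such that α·v = β_0·L_0 + Σ_{i=1}^r β_i·(L_0 − L_i). Then there exist nonnegative integers γ_0, …, γ_r such that v = Σ_{i=0}^r γ_i · (L_i/𝔩_i), where each L_i/𝔩_i lies in ℤ^n. -/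
/-!
Read coordinatewise, the relation says `α · v_x = c_i · l_{i,x}` on the `i`-th block, where
`c_0 = Σ_k β_k` and `c_i = -β_i` for `i ≥ 1`. Hence `α ∣ c_i · l_{i,j}` for all `j`, so
`α ∣ |c_i| · 𝔩_i`, and `γ_i = |c_i| 𝔩_i / α` works: as `α · v ≥ 0`, `c_i · l_{i,j} = |c_i| · l_{i,j}`.
-/

/-- The block vector `L_i ∈ ℤ^n`, whose `i`-th block equals `l_i` and whose other
blocks vanish. -/
def blockL {r : ℕ} {n : Fin (r + 1) → ℕ} (l : (i : Fin (r + 1)) → Fin (n i) → ℕ)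
    (i : Fin (r + 1)) : ((j : Fin (r + 1)) × Fin (n j)) → ℤ :=
  fun x => if x.1 = i then (l x.1 x.2 : ℤ) else 0

/-- The block vector `L_i / 𝔩_i ∈ ℤ^n`, where `𝔩_i` is the gcd of the entries of
`l_i` (it divides every entry, so the quotient vector is integral). -/
def blockLred {r : ℕ} {n : Fin (r + 1) → ℕ} (l : (i : Fin (r + 1)) → Fin (n i) → ℕ)
    (i : Fin (r + 1)) : ((j : Fin (r + 1)) × Fin (n j)) → ℤ :=
  fun x => if x.1 = i then ((l x.1 x.2 / Finset.univ.gcd (l i) : ℕ) : ℤ) else 0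

theorem Int.natAbs_dvd_natAbs_mul_finset_gcd {ι : Type*} (s : Finset ι) (f : ι → ℕ) {a c : ℤ}
    (h : ∀ j ∈ s, a ∣ c * f j) : a.natAbs ∣ c.natAbs * s.gcd f := by
  rw [← normalize_eq c.natAbs, ← Finset.gcd_mul_left, Finset.dvd_gcd_iff]
  intro j hj
  simpa [Int.natAbs_mul] using Int.natAbs_dvd_natAbs.mpr (h j hj)

theorem exists_eq_nat_mul_div_gcd_of_mul_eq_mul {ι : Type*} [Fintype ι] (l : ι → ℕ) (v : ι → ℤ)
    (hv : ∀ j, 0 ≤ v j) {α c : ℤ} (hα : 0 < α) (h : ∀ j, α * v j = c * l j) :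
    ∃ γ : ℕ, ∀ j, v j = γ * (l j / Finset.univ.gcd l : ℕ) := by
  obtain ⟨γ, hγ⟩ := Int.natAbs_dvd_natAbs_mul_finset_gcd Finset.univ l fun j _ => ⟨v j, (h j).symm⟩
  refine ⟨γ, fun j => mul_left_cancel₀ hα.ne' ?_⟩
  have hdvd : Finset.univ.gcd l ∣ l j := Finset.gcd_dvd (Finset.mem_univ j)
  calc α * v j = |c * l j| := by rw [← h, abs_of_nonneg (mul_nonneg hα.le (hv j))]
    _ = ((c.natAbs * Finset.univ.gcd l * (l j / Finset.univ.gcd l) : ℕ) : ℤ) := by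
      rw [mul_assoc, Nat.mul_div_cancel' hdvd, abs_mul, Nat.abs_cast]; push_cast; rfl
    _ = α * (γ * (l j / Finset.univ.gcd l : ℕ)) := by
      rw [hγ]; push_cast; rw [abs_of_pos hα, mul_assoc]

section Blocks

variable {r : ℕ} {n : Fin (r + 1) → ℕ} (l : (i : Fin (r + 1)) → Fin (n i) → ℕ)

theorem sum_smul_blockL_apply (c : Fin (r + 1) → ℤ) (x : (j : Fin (r + 1)) × Fin (n j)) :
    (∑ i, c i • blockL l i) x = c x.1 * l x.1 x.2 := by
  simp [blockL]

theorem sum_smul_blockLred_apply (c : Fin (r + 1) → ℤ) (x : (j : Fin (r + 1)) × Fin (n j)) :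
    (∑ i, c i • blockLred l i) x = c x.1 * (l x.1 x.2 / Finset.univ.gcd (l x.1) : ℕ) := by
  simp [blockLred]

def relCoeff (β : Fin (r + 1) → ℤ) (i : Fin (r + 1)) : ℤ :=
  if i = 0 then ∑ k, β k else -β i

theorem relation_eq_sum_relCoeff_smul (β : Fin (r + 1) → ℤ) :
    β 0 • blockL l 0 + ∑ i ∈ Finset.univ.erase 0, β i • (blockL l 0 - blockL l i) =
      ∑ i, relCoeff β i • blockL l i := by
  have hcoeff : ∀ i ∈ Finset.univ.erase 0, relCoeff β i • blockL l i = -β i • blockL l i :=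
    fun i hi => by rw [relCoeff, if_neg (Finset.ne_of_mem_erase hi)]
  rw [← Finset.add_sum_erase _ _ (Finset.mem_univ 0), Finset.sum_congr rfl hcoeff, relCoeff,
    if_pos rfl, ← Finset.add_sum_erase _ _ (Finset.mem_univ 0)]
  simp only [smul_sub, Finset.sum_sub_distrib, ← Finset.sum_smul, add_smul, neg_smul,
    Finset.sum_neg_distrib]
  abel

end Blocks

theorem veronese_monomial_decomposition_general (r : ℕ)
    (n : Fin (r + 1) → ℕ)
    (l : (i : Fin (r + 1)) → Fin (n i) → ℕ)
    (v : ((j : Fin (r + 1)) × Fin (n j)) → ℤ) (hv : ∀ x, 0 ≤ v x)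
    (α : ℤ) (hα : 0 < α) (β : Fin (r + 1) → ℤ)
    (heq : α • v = β 0 • blockL l 0 +
      ∑ i ∈ Finset.univ.erase (0 : Fin (r + 1)),
        β i • (blockL l 0 - blockL l i)) :
    ∃ γ : Fin (r + 1) → ℕ, v = ∑ i, (γ i : ℤ) • blockLred l i := by
  rw [relation_eq_sum_relCoeff_smul] at heq
  have hcoord (x : (j : Fin (r + 1)) × Fin (n j)) : α * v x = relCoeff β x.1 * l x.1 x.2 := by
    rw [← sum_smul_blockL_apply, ← heq, Pi.smul_apply, smul_eq_mul]
  choose γ hγ using fun i => exists_eq_nat_mul_div_gcd_of_mul_eq_mul (l i) (fun j => v ⟨i, j⟩)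
    (fun j => hv ⟨i, j⟩) hα (fun j => hcoord ⟨i, j⟩)
  exact ⟨γ, funext fun ⟨i, j⟩ => by rw [sum_smul_blockLred_apply]; exact hγ i j⟩

/-- Combinatorial core of the paper's Lemma 5.4: a nonnegative integral vector `v`
with `α·v = β_0 L_0 + Σ_{i=1}^r β_i (L_0 − L_i)` for some integer `α > 0` and
integers `β_i` is a nonnegative integral combination of the vectors `L_i/𝔩_i`. -/
theorem veronese_monomial_decomposition (r : ℕ) (hr : 1 ≤ r)
    (n : Fin (r + 1) → ℕ) (hn : ∀ i, 1 ≤ n i)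
    (l : (i : Fin (r + 1)) → Fin (n i) → ℕ) (hl : ∀ i j, 0 < l i j)
    (v : ((j : Fin (r + 1)) × Fin (n j)) → ℤ) (hv : ∀ x, 0 ≤ v x)
    (α : ℤ) (hα : 0 < α) (β : Fin (r + 1) → ℤ)
    (heq : α • v = β 0 • blockL l 0 +
      ∑ i ∈ Finset.univ.erase (0 : Fin (r + 1)),
        β i • (blockL l 0 - blockL l i)) :
    ∃ γ : Fin (r + 1) → ℕ, v = ∑ i, (γ i : ℤ) • blockLred l i :=
  veronese_monomial_decomposition_general r n l v hv α hα β heq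
end

section
/- Let ι and ζ be positive integers and let μ_0, μ_1, μ_2 be integers such that μ_0 + μ_1 + μ_2 = ι, ζ divides ι − 5μ_0, ζ divides ι − 3μ_1, ζ divides ι − 2μ_2, and gcd(μ_1, μ_2, ζ, ι) = 1. Then ζ = 1. -/
/-- Case `(5,3,2)` of the paper's Proposition 4.7: the divisibility conditions force
canonical multiplicity `ζ = 1`. -/
theorem canonical_multiplicity_532 (ι ζ : ℕ) (hι : 0 < ι) (hζ : 0 < ζ)
    (μ0 μ1 μ2 : ℤ) (hsum : μ0 + μ1 + μ2 = (ι : ℤ))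
    (h0 : (ζ : ℤ) ∣ (ι : ℤ) - 5 * μ0)
    (h1 : (ζ : ℤ) ∣ (ι : ℤ) - 3 * μ1)
    (h2 : (ζ : ℤ) ∣ (ι : ℤ) - 2 * μ2)
    (hgcd : Nat.gcd μ1.natAbs (Nat.gcd μ2.natAbs (Nat.gcd ζ ι)) = 1) :
    ζ = 1 := by
  have hzι : (ζ : ℤ) ∣ (ι : ℤ) := by
    have h := dvd_add (dvd_add (h0.mul_left 6) (h1.mul_left 10)) (h2.mul_left 15)
    have e : 6 * ((ι:ℤ) - 5*μ0) + 10 * ((ι:ℤ) - 3*μ1) + 15 * ((ι:ℤ) - 2*μ2) = (ι:ℤ) := by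
      linarith
    rwa [e] at h
  have hA : (ζ : ℤ) ∣ 5*μ1 + 5*μ2 := by
    have h := dvd_add (hzι.mul_left 4) h0
    have e : 4 * (ι:ℤ) + ((ι:ℤ) - 5*μ0) = 5*μ1 + 5*μ2 := by linarith
    rwa [e] at h
  have hB : (ζ : ℤ) ∣ 3*μ1 := by
    have h := hzι.sub h1
    have e : (ι:ℤ) - ((ι:ℤ) - 3*μ1) = 3*μ1 := by ring
    rwa [e] at h
  have hC : (ζ : ℤ) ∣ 2*μ2 := by
    have h := hzι.sub h2
    have e : (ι:ℤ) - ((ι:ℤ) - 2*μ2) = 2*μ2 := by ring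
    rwa [e] at h
  have hμ1 : (ζ : ℤ) ∣ μ1 := by
    have h := (hA.mul_left 2).sub ((hC.mul_left 5).add (hB.mul_left 3))
    have e : 2 * (5*μ1 + 5*μ2) - (5 * (2*μ2) + 3 * (3*μ1)) = μ1 := by ring
    rwa [e] at h
  have hμ2 : (ζ : ℤ) ∣ μ2 := by
    have h := (hA.mul_left 3).sub ((hB.mul_left 5).add (hC.mul_left 7))
    have e : 3 * (5*μ1 + 5*μ2) - (5 * (3*μ1) + 7 * (2*μ2)) = μ2 := by ring
    rwa [e] at h
  have d1 : ζ ∣ μ1.natAbs := by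
    have := Int.natAbs_dvd_natAbs.mpr hμ1
    simpa using this
  have d2 : ζ ∣ μ2.natAbs := by
    have := Int.natAbs_dvd_natAbs.mpr hμ2
    simpa using this
  have dι : ζ ∣ ι := by exact_mod_cast hzι
  have : ζ ∣ 1 := hgcd ▸ Nat.dvd_gcd d1 (Nat.dvd_gcd d2 (Nat.dvd_gcd dvd_rfl dι))
  exact Nat.dvd_one.mp this
end

section
/- Let ι and ζ be positive integers and let μ_0, μ_1, μ_2 be integers such that μ_0 + μ_1 + μ_2 = ι, ζ divides ι − 4μ_0, ζ divides ι − 3μ_1, ζ divides ι − 2μ_2, and gcd(μ_1, μ_2, ζ, ι) = 1. Then ζ = 1 or ζ = 2; moreover, if ζ = 2 then ι is even. -/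
/-- Case `(4,3,2)` of the paper's Proposition 4.7: the divisibility conditions force
canonical multiplicity `ζ ∈ {1, 2}`, and if `ζ = 2` then the Gorenstein index `ι`
is even. -/
theorem canonical_multiplicity_432 (ι ζ : ℕ) (hι : 0 < ι) (hζ : 0 < ζ)
    (μ0 μ1 μ2 : ℤ) (hsum : μ0 + μ1 + μ2 = (ι : ℤ))
    (h0 : (ζ : ℤ) ∣ (ι : ℤ) - 4 * μ0)
    (h1 : (ζ : ℤ) ∣ (ι : ℤ) - 3 * μ1)
    (h2 : (ζ : ℤ) ∣ (ι : ℤ) - 2 * μ2)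
    (hgcd : Nat.gcd μ1.natAbs (Nat.gcd μ2.natAbs (Nat.gcd ζ ι)) = 1) :
    (ζ = 1 ∨ ζ = 2) ∧ (ζ = 2 → 2 ∣ ι) := by
  obtain ⟨k0, hk0⟩ := h0
  obtain ⟨k1, hk1⟩ := h1
  obtain ⟨k2, hk2⟩ := h2
  -- ζ divides ι
  have hzι : (ζ : ℤ) ∣ (ι : ℤ) := ⟨3 * k0 + 4 * k1 + 6 * k2, by linarith⟩
  have hzιn : ζ ∣ ι := by exact_mod_cast hzι
  -- ζ divides 3μ1, 2μ2, 4(μ1+μ2)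
  have h3μ1 : (ζ : ℤ) ∣ 3 * μ1 := by
    have := dvd_sub hzι ⟨k1, hk1⟩; simpa using this
  have h2μ2 : (ζ : ℤ) ∣ 2 * μ2 := by
    have := dvd_sub hzι ⟨k2, hk2⟩; simpa using this
  have h4s : (ζ : ℤ) ∣ 4 * (μ1 + μ2) := by
    obtain ⟨m, hm⟩ := hzι
    exact ⟨k0 + 3 * m, by linarith⟩
  -- pass to ℕ
  have h3n : ζ ∣ 3 * μ1.natAbs := by
    have := Int.natAbs_dvd_natAbs.mpr h3μ1
    simpa [Int.natAbs_mul] using this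
  have h2n : ζ ∣ 2 * μ2.natAbs := by
    have := Int.natAbs_dvd_natAbs.mpr h2μ2
    simpa [Int.natAbs_mul] using this
  set d1 := Nat.gcd ζ μ1.natAbs with hd1
  set d2 := Nat.gcd ζ μ2.natAbs with hd2
  have hcop : Nat.gcd d1 d2 = 1 := by
    have h1' : Nat.gcd d1 d2 ∣ μ1.natAbs := (Nat.gcd_dvd_left d1 d2).trans (Nat.gcd_dvd_right _ _)
    have h2' : Nat.gcd d1 d2 ∣ μ2.natAbs := (Nat.gcd_dvd_right d1 d2).trans (Nat.gcd_dvd_right _ _)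
    have hz' : Nat.gcd d1 d2 ∣ ζ := (Nat.gcd_dvd_left d1 d2).trans (Nat.gcd_dvd_left _ _)
    have : Nat.gcd d1 d2 ∣ Nat.gcd μ1.natAbs (Nat.gcd μ2.natAbs (Nat.gcd ζ ι)) :=
      Nat.dvd_gcd h1' (Nat.dvd_gcd h2' (Nat.dvd_gcd hz' (hz'.trans hzιn)))
    rw [hgcd] at this
    exact Nat.eq_one_of_dvd_one this
  have hz3d1 : ζ ∣ 3 * d1 := by
    have : ζ ∣ Nat.gcd (3 * ζ) (3 * μ1.natAbs) := Nat.dvd_gcd ⟨3, by ring⟩ h3n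
    simpa [Nat.gcd_mul_left] using this
  have hz2d2 : ζ ∣ 2 * d2 := by
    have : ζ ∣ Nat.gcd (2 * ζ) (2 * μ2.natAbs) := Nat.dvd_gcd ⟨2, by ring⟩ h2n
    simpa [Nat.gcd_mul_left] using this
  have hz6 : ζ ∣ 6 := by
    have : ζ ∣ Nat.gcd (6 * d1) (6 * d2) :=
      Nat.dvd_gcd (hz3d1.trans ⟨2, by ring⟩) (hz2d2.trans ⟨3, by ring⟩)
    simpa [Nat.gcd_mul_left, hcop] using this
  have hnot3 : ¬ (3 ∣ ζ) := by
    intro h3z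
    have h3z' : (3 : ℤ) ∣ (ζ : ℤ) := by exact_mod_cast h3z
    have h32 : (3 : ℤ) ∣ 2 * μ2 := h3z'.trans h2μ2
    have h3μ2 : (3 : ℤ) ∣ μ2 := by omega
    have h34 : (3 : ℤ) ∣ 4 * (μ1 + μ2) := h3z'.trans h4s
    have h3μ1' : (3 : ℤ) ∣ μ1 := by omega
    have d1' : (3 : ℕ) ∣ μ1.natAbs := by
      simpa using Int.natAbs_dvd_natAbs.mpr h3μ1'
    have d2' : (3 : ℕ) ∣ μ2.natAbs := by
      simpa using Int.natAbs_dvd_natAbs.mpr h3μ2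
    have : (3 : ℕ) ∣ 1 := by
      rw [← hgcd]
      exact Nat.dvd_gcd d1' (Nat.dvd_gcd d2' (Nat.dvd_gcd h3z (h3z.trans hzιn)))
    omega
  have hζle : ζ ≤ 6 := Nat.le_of_dvd (by norm_num) hz6
  constructor
  · interval_cases ζ <;> omega
  · intro h2z
    rw [h2z] at hzιn
    exact hzιn
end

section
/- Let ι and ζ be positive integers and let μ_0, μ_1, μ_2 be integers such that μ_0 + μ_1 + μ_2 = ι, ζ divides ι − 3μ_0, ζ divides ι − 3μ_1, ζ divides ι − 2μ_2, and gcd(μ_1, μ_2, ζ, ι) = 1. Then ζ = 1 or ζ = 3; moreover, if ζ = 3 then 3 divides ι. -/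
/-- Case `(3,3,2)` of the paper's Proposition 4.7: the divisibility conditions force
canonical multiplicity `ζ ∈ {1, 3}`, and if `ζ = 3` then `3` divides the Gorenstein
index `ι`. -/
theorem canonical_multiplicity_332 (ι ζ : ℕ) (hι : 0 < ι) (hζ : 0 < ζ)
    (μ0 μ1 μ2 : ℤ) (hsum : μ0 + μ1 + μ2 = (ι : ℤ))
    (h0 : (ζ : ℤ) ∣ (ι : ℤ) - 3 * μ0)
    (h1 : (ζ : ℤ) ∣ (ι : ℤ) - 3 * μ1)
    (h2 : (ζ : ℤ) ∣ (ι : ℤ) - 2 * μ2)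
    (hgcd : Nat.gcd μ1.natAbs (Nat.gcd μ2.natAbs (Nat.gcd ζ ι)) = 1) :
    (ζ = 1 ∨ ζ = 3) ∧ (ζ = 3 → 3 ∣ ι) := by
  have hμ2 : (ζ : ℤ) ∣ μ2 := by
    have := dvd_add (dvd_add h0 h1) h2
    have e : ((ι : ℤ) - 3 * μ0) + ((ι : ℤ) - 3 * μ1) + ((ι : ℤ) - 2 * μ2) = μ2 := by
      linarith
    rwa [e] at this
  have hιd : (ζ : ℤ) ∣ (ι : ℤ) := by
    have := dvd_add h2 (hμ2.mul_left 2)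
    simpa using this
  have hιn : ζ ∣ ι := Int.ofNat_dvd.mp hιd
  have hμ2n : ζ ∣ μ2.natAbs := by simpa using Int.natAbs_dvd_natAbs.mpr hμ2
  have h3μ1 : (ζ : ℤ) ∣ 3 * μ1 := by
    have := dvd_sub hιd h1
    simpa using this
  have h3μ1n : ζ ∣ 3 * μ1.natAbs := by
    have := Int.natAbs_dvd_natAbs.mpr h3μ1
    simpa [Int.natAbs_mul] using this
  -- gcd(μ1, ζ) = 1
  have hcop : Nat.Coprime ζ μ1.natAbs := by
    have hd : Nat.gcd ζ μ1.natAbs ∣ 1 := by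
      rw [← hgcd]
      exact Nat.dvd_gcd (Nat.gcd_dvd_right _ _)
        (Nat.dvd_gcd ((Nat.gcd_dvd_left _ _).trans hμ2n)
          (Nat.dvd_gcd (Nat.gcd_dvd_left _ _) ((Nat.gcd_dvd_left _ _).trans hιn)))
    exact Nat.eq_one_of_dvd_one hd
  have h3 : ζ ∣ 3 := hcop.dvd_of_dvd_mul_right h3μ1n
  have hζ3 : ζ ≤ 3 := Nat.le_of_dvd (by norm_num) h3
  interval_cases ζ
  · exact ⟨Or.inl rfl, by omega⟩
  · omega
  · exact ⟨Or.inr rfl, fun _ => hιn⟩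
end

section
/- Let k, ι, ζ be positive integers and let μ_0, μ_1, μ_2 be integers such that μ_0 + μ_1 + μ_2 = ι, ζ divides ι − kμ_0, ζ divides ι − 2μ_1, ζ divides ι − 2μ_2, and gcd(μ_1, μ_2, ζ, ι) = 1. Then ζ ∈ {1, 2, 4}; if ζ = 4 then k is odd and ι ≡ 2 (mod 4); and if k is even then ζ ∈ {1, 2}. -/
/-- Case `(k,2,2)` of the paper's Proposition 4.7: the divisibility conditions force
canonical multiplicity `ζ ∈ {1, 2, 4}`; if `ζ = 4` then `k` is odd and
`ι ≡ 2 (mod 4)`; and if `k` is even then `ζ ∈ {1, 2}`. -/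
theorem canonical_multiplicity_k22 (k ι ζ : ℕ) (hk : 0 < k) (hι : 0 < ι)
    (hζ : 0 < ζ) (μ0 μ1 μ2 : ℤ) (hsum : μ0 + μ1 + μ2 = (ι : ℤ))
    (h0 : (ζ : ℤ) ∣ (ι : ℤ) - (k : ℤ) * μ0)
    (h1 : (ζ : ℤ) ∣ (ι : ℤ) - 2 * μ1)
    (h2 : (ζ : ℤ) ∣ (ι : ℤ) - 2 * μ2)
    (hgcd : Nat.gcd μ1.natAbs (Nat.gcd μ2.natAbs (Nat.gcd ζ ι)) = 1) :
    (ζ = 1 ∨ ζ = 2 ∨ ζ = 4) ∧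
    (ζ = 4 → Odd k ∧ ι % 4 = 2) ∧
    (Even k → ζ = 1 ∨ ζ = 2) := by
  have h2mu0 : (ζ : ℤ) ∣ 2 * μ0 := by
    have h := dvd_add h1 h2
    have e : 2 * μ0 = ((ι : ℤ) - 2 * μ1) + ((ι : ℤ) - 2 * μ2) := by linarith
    rw [e]; exact h
  have h2i : (ζ : ℤ) ∣ 2 * (ι : ℤ) := by
    have h := dvd_add (Dvd.dvd.mul_left h0 2) (Dvd.dvd.mul_left h2mu0 (k : ℤ))
    have e : 2 * (ι : ℤ) = 2 * ((ι : ℤ) - (k : ℤ) * μ0) + (k : ℤ) * (2 * μ0) := by ring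
    rw [e]; exact h
  have h4mu1 : (ζ : ℤ) ∣ 4 * μ1 := by
    have h := dvd_sub h2i (Dvd.dvd.mul_left h1 2)
    have e : 4 * μ1 = 2 * (ι : ℤ) - 2 * ((ι : ℤ) - 2 * μ1) := by ring
    rw [e]; exact h
  have h4mu2 : (ζ : ℤ) ∣ 4 * μ2 := by
    have h := dvd_sub h2i (Dvd.dvd.mul_left h2 2)
    have e : 4 * μ2 = 2 * (ι : ℤ) - 2 * ((ι : ℤ) - 2 * μ2) := by ring
    rw [e]; exact h
  have n1 : ζ ∣ 4 * μ1.natAbs := by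
    have h := Int.natAbs_dvd_natAbs.mpr h4mu1
    simpa [Int.natAbs_mul] using h
  have n2 : ζ ∣ 4 * μ2.natAbs := by
    have h := Int.natAbs_dvd_natAbs.mpr h4mu2
    simpa [Int.natAbs_mul] using h
  have n3 : ζ ∣ 4 * ζ := dvd_mul_left ζ 4
  have n4 : ζ ∣ 4 * ι := by
    have h4i : (ζ : ℤ) ∣ 4 * (ι : ℤ) := by
      have h := Dvd.dvd.mul_left h2i 2
      have e : 4 * (ι : ℤ) = 2 * (2 * (ι : ℤ)) := by ring
      rw [e]; exact h
    exact_mod_cast Int.natCast_dvd_natCast.mp (by exact_mod_cast h4i)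
  have hdvd4 : ζ ∣ 4 := by
    have h := Nat.dvd_gcd n1 (Nat.dvd_gcd n2 (Nat.dvd_gcd n3 n4))
    simp only [Nat.gcd_mul_left] at h
    rw [hgcd, mul_one] at h
    exact h
  have hcases : ζ = 1 ∨ ζ = 2 ∨ ζ = 4 := by
    have hle := Nat.le_of_dvd (by norm_num) hdvd4
    interval_cases ζ <;> omega
  have part2 : ζ = 4 → Odd k ∧ ι % 4 = 2 := by
    intro hζ4
    subst hζ4
    have h1c : (4 : ℤ) ∣ (ι : ℤ) - 2 * μ1 := by exact_mod_cast h1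
    have h2c : (4 : ℤ) ∣ (ι : ℤ) - 2 * μ2 := by exact_mod_cast h2
    have h0c : (4 : ℤ) ∣ (ι : ℤ) - (k : ℤ) * μ0 := by exact_mod_cast h0
    have h2m0c : (4 : ℤ) ∣ 2 * μ0 := by exact_mod_cast h2mu0
    -- ι is even
    have hev : (2 : ℤ) ∣ (ι : ℤ) := by omega
    -- ι % 4 ≠ 0
    have hne : ι % 4 ≠ 0 := by
      intro h4ι
      have hi : (4 : ℤ) ∣ (ι : ℤ) := by
        have : (4 : ℕ) ∣ ι := Nat.dvd_of_mod_eq_zero h4ι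
        exact_mod_cast this
      have hm1 : (2 : ℤ) ∣ μ1 := by omega
      have hm2 : (2 : ℤ) ∣ μ2 := by omega
      have hm1n : 2 ∣ μ1.natAbs := by
        have := Int.natAbs_dvd_natAbs.mpr hm1
        simpa using this
      have hm2n : 2 ∣ μ2.natAbs := by
        have := Int.natAbs_dvd_natAbs.mpr hm2
        simpa using this
      have hin : 2 ∣ ι := by omega
      have h2g : 2 ∣ Nat.gcd μ1.natAbs (Nat.gcd μ2.natAbs (Nat.gcd 4 ι)) :=
        Nat.dvd_gcd hm1n (Nat.dvd_gcd hm2n (Nat.dvd_gcd ⟨2, rfl⟩ hin))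
      rw [hgcd] at h2g
      omega
    have hι42 : ι % 4 = 2 := by omega
    refine ⟨?_, hι42⟩
    rcases Nat.even_or_odd k with hke | hko
    · exfalso
      obtain ⟨j, hj⟩ := hke
      obtain ⟨e, he⟩ := h0c
      obtain ⟨c, hc⟩ : ∃ c, μ0 = 2 * c := ⟨μ0 / 2, by omega⟩
      have hdvd : (4 : ℤ) ∣ (ι : ℤ) := by
        refine ⟨e + (j : ℤ) * c, ?_⟩
        have hj' : (k : ℤ) = (j : ℤ) + (j : ℤ) := by exact_mod_cast hj
        rw [hc, hj'] at he
        linarith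
      omega
    · exact hko
  refine ⟨hcases, part2, ?_⟩
  intro hke
  rcases hcases with h | h | h
  · exact Or.inl h
  · exact Or.inr h
  · exact absurd (part2 h).1 (Nat.not_odd_iff_even.mpr hke)
end

section
/- Let r ≥ 2, let n_0, …, n_r ≥ 1 and m ≥ 0, and let l_i ∈ (ℤ_{>0})^{n_i} for i = 0, …, r be such that every tuple (l_{0j_0}, …, l_{rj_r}), with 1 ≤ j_i ≤ n_i, is a platonic tuple and l_{ij} = 1 for all i ≥ 3 and all j. Set 𝔩_i = gcd of the entries of l_i and assume gcd(𝔩_1, 𝔩_2) = gcd(𝔩_0, 𝔩_1, …, 𝔩_r). Put n = n_0 + … + n_r and write vectors of ℤ^{n+m} in blocks of sizes n_0, …, n_r, m. For 1 ≤ i ≤ r let u_i ∈ ℤ^{n+m} be the vector with block 0 equal to −l_0, block i equal to l_i and all other blocks (including the last block of size m) zero, and let w_1 = (1/gcd(𝔩_0, 𝔩_1))·u_1 and w_2 = (1/gcd(𝔩_0, 𝔩_2))·u_2, which are integral vectors. Then the saturation of the subgroup ⟨u_1, …, u_r⟩ of ℤ^{n+m} — that is, the kernel of the composite map ℤ^{n+m}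 → (ℤ^{n+m}/⟨u_1, …, u_r⟩)/torsion — equals the subgroup of ℤ^{n+m} generated by w_1, w_2, u_3, …, u_r. -/
/-! If `k • v = ∑ cᵢ • uᵢ` with `k ≠ 0`, reading off block `i ≥ 1` gives `k ∣ cᵢ 𝔩ᵢ`, and block `0`
gives `k ∣ (c₁ + ⋯ + c_r) 𝔩₀`. As `𝔩ᵢ = 1` for `i ≥ 3`, `k` divides `c₃, …, c_r`, so
`k ∣ (c₁ + c₂) 𝔩₀`; together with `gcd(𝔩₁, 𝔩₂) ∣ 𝔩₀` this upgrades to `k ∣ cᵢ gcd(𝔩₀, 𝔩ᵢ)` for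
`i = 1, 2`. Hence `k • v` is `k` times an integral combination of `w₁, w₂, u₃, …, u_r`. -/

open Finset Submodule Pointwise nonZeroDivisors

theorem Int.dvd_mul_gcd_of_dvd_mul {k a : ℤ} {g h : ℕ} (hg : k ∣ a * g) (hh : k ∣ a * h) :
    k ∣ a * (Nat.gcd g h : ℤ) := by
  rw [Nat.gcd_eq_gcd_ab, mul_add, ← mul_assoc, ← mul_assoc]
  exact dvd_add (hg.mul_right _) (hh.mul_right _)

theorem Int.dvd_mul_finset_gcd_of_dvd_mul {ι : Type*} {s : Finset ι} {f : ι → ℕ} {k a : ℤ}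
    (h : ∀ i ∈ s, k ∣ a * f i) : k ∣ a * ((s.gcd f : ℕ) : ℤ) := by
  classical
  induction s using Finset.induction_on with
  | empty => simp
  | insert i s _ ih =>
    rw [gcd_insert]
    exact Int.dvd_mul_gcd_of_dvd_mul (h i (mem_insert_self i s))
      (ih fun j hj => h j (mem_insert_of_mem hj))

/-- A valuation comparison prime by prime; globally, Bézout turns `k ∣ a t g₁` and `k ∣ a t g₂`
into `k ∣ a t gcd(g₁, g₂) = a g₀`. -/
theorem Int.dvd_mul_of_gcd_dvd_of_dvd_add_mul {k a b : ℤ} {g₀ g₁ g₂ : ℕ}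
    (hg : Nat.gcd g₁ g₂ ∣ g₀) (h₁ : k ∣ a * g₁) (h₂ : k ∣ b * g₂) (h₀ : k ∣ (a + b) * g₀) :
    k ∣ a * g₀ := by
  set d := Nat.gcd g₁ g₂
  obtain ⟨t, rfl⟩ := hg
  obtain ⟨s, hs⟩ : d ∣ g₂ := Nat.gcd_dvd_right g₁ g₂
  have h₂' : k ∣ a * t * g₂ := by
    have : a * t * g₂ = s * ((a + b) * ↑(d * t)) - t * (b * g₂) := by
      rw [hs]; push_cast; ring
    rw [this]
    exact dvd_sub (h₀.mul_left _) (h₂.mul_left _)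
  have h₁' : k ∣ a * t * g₁ := by
    rw [mul_right_comm]; exact h₁.mul_right _
  have := Int.dvd_mul_gcd_of_dvd_mul h₁' h₂'
  rwa [mul_assoc, mul_comm (t : ℤ), ← Nat.cast_mul] at this

theorem Fin.val_one_of_one_le {r : ℕ} (hr : 1 ≤ r) : ((1 : Fin (r + 1)) : ℕ) = 1 :=
  Nat.mod_eq_of_lt (by omega : 1 < r + 1)

theorem Fin.val_two_of_two_le {r : ℕ} (hr : 2 ≤ r) : ((2 : Fin (r + 1)) : ℕ) = 2 :=
  Nat.mod_eq_of_lt (by omega : 2 < r + 1)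

theorem Fin.one_ne_zero_of_one_le {r : ℕ} (hr : 1 ≤ r) : (1 : Fin (r + 1)) ≠ 0 :=
  Fin.ne_of_val_ne (by rw [Fin.val_one_of_one_le hr]; simp)

theorem Fin.two_ne_zero_of_two_le {r : ℕ} (hr : 2 ≤ r) : (2 : Fin (r + 1)) ≠ 0 :=
  Fin.ne_of_val_ne (by rw [Fin.val_two_of_two_le hr]; simp)

theorem Fin.eq_zero_or_eq_one_or_eq_two_or_three_le {r : ℕ} (hr : 2 ≤ r) (i : Fin (r + 1)) :
    i = 0 ∨ i = 1 ∨ i = 2 ∨ 3 ≤ (i : ℕ) := by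
  simp only [Fin.ext_iff, Fin.val_one_of_one_le (by omega : 1 ≤ r), Fin.val_two_of_two_le hr,
    Fin.val_zero]
  omega

theorem Fin.dvd_sum_univ_sub_add_add_of_dvd {r : ℕ} (hr : 2 ≤ r) {k : ℤ} {c : Fin (r + 1) → ℤ}
    (hc : ∀ i : Fin (r + 1), 3 ≤ (i : ℕ) → k ∣ c i) : k ∣ ∑ i, c i - (c 0 + c 1 + c 2) := by
  obtain ⟨r, rfl⟩ : ∃ r', r = r' + 2 := ⟨r - 2, by omega⟩
  simp only [Fin.sum_univ_succ, Fin.succ_zero_eq_one, Fin.succ_one_eq_two]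
  ring_nf
  exact dvd_sum fun i _ => hc _ (by simp)

namespace Submodule

variable {R M : Type*} [CommRing R] [AddCommGroup M] [Module R M]

def saturation (S : Submodule R M) : Submodule R M :=
  (torsion R (M ⧸ S)).comap S.mkQ

theorem mem_saturation_iff {S : Submodule R M} {v : M} :
    v ∈ S.saturation ↔ ∃ a ∈ R⁰, a • v ∈ S := by
  simp only [saturation, mem_comap, mem_torsion_iff, mkQ_apply, ← Quotient.mk_smul,
    Quotient.mk_eq_zero, Subtype.exists, Submonoid.mk_smul, exists_prop]

theorem le_saturation (S : Submodule R M) : S ≤ S.saturation := fun v hv =>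
  mem_saturation_iff.mpr ⟨1, one_mem _, by rwa [one_smul]⟩

theorem smul_mem_pointwise_smul_of_dvd {N : Submodule R M} {k a : R} (h : k ∣ a) {y : M}
    (hy : y ∈ N) : a • y ∈ k • N := by
  obtain ⟨q, rfl⟩ := h
  rw [mul_smul]
  exact smul_mem_pointwise_smul _ _ _ (N.smul_mem q hy)

theorem mem_of_smul_mem_pointwise_smul [Module.IsTorsionFree R M] {N : Submodule R M} {a : R}
    (ha : IsRegular a) {v : M} (h : a • v ∈ a • N) : v ∈ N := by
  obtain ⟨y, hy, hyv⟩ := (mem_smul_pointwise_iff_exists _ _ _).mp h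
  rwa [← ha.smul_right_injective M hyv]

theorem ediv_mem_saturation {X : Type*} {S : Submodule ℤ (X → ℤ)} {u : X → ℤ}
    (hu : u ∈ S) {d : ℤ} (hd : ∀ x, d ∣ u x) : (fun x => u x / d) ∈ S.saturation := by
  rcases eq_or_ne d 0 with rfl | hd0
  · simp only [Int.ediv_zero]
    exact zero_mem _
  refine mem_saturation_iff.mpr ⟨d, mem_nonZeroDivisors_of_ne_zero hd0, ?_⟩
  convert hu using 1
  exact funext fun x => Int.mul_ediv_cancel' (hd x)

end Submodule

section PlatonicRow

variable {r : ℕ} {n : Fin (r + 1) → ℕ} {m : ℕ} (l : (i : Fin (r + 1)) → Fin (n i) → ℕ)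

def platonicRow (i : Fin (r + 1)) : ((i : Fin (r + 1)) × Fin (n i)) ⊕ Fin m → ℤ :=
  Sum.elim
    (fun x => (if x.1 = i then (l x.1 x.2 : ℤ) else 0) - (if x.1 = 0 then (l x.1 x.2 : ℤ) else 0))
    (fun _ => 0)

theorem platonicRow_zero :
    (platonicRow l 0 : ((i : Fin (r + 1)) × Fin (n i)) ⊕ Fin m → ℤ) = 0 := by
  ext (x | x) <;> simp [platonicRow]

theorem sum_smul_platonicRow_inl (c : Fin (r + 1) → ℤ) (s : Fin (r + 1)) (j : Fin (n s)) :
    (∑ i, c i • platonicRow (m := m) l i) (Sum.inl ⟨s, j⟩) =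
      (c s - if s = 0 then ∑ i, c i else 0) * l s j := by
  simp only [Finset.sum_apply, Pi.smul_apply, platonicRow, Sum.elim_inl, smul_eq_mul, mul_sub,
    sum_sub_distrib, mul_ite, mul_zero, sum_ite_eq, mem_univ, if_true]
  split_ifs <;> simp [sub_mul, sum_mul]

theorem gcd_dvd_platonicRow {t : Fin (r + 1)} (ht : t ≠ 0)
    (x : ((i : Fin (r + 1)) × Fin (n i)) ⊕ Fin m) :
    (Nat.gcd (univ.gcd (l 0)) (univ.gcd (l t)) : ℤ) ∣ platonicRow l t x := by
  rcases x with ⟨s, j⟩ | x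
  · simp only [platonicRow, Sum.elim_inl]
    by_cases hs : s = t
    · subst hs
      simp only [if_neg ht, sub_zero, ↓reduceIte, Int.natCast_dvd_natCast]
      exact (Nat.gcd_dvd_right _ _).trans (univ.gcd_dvd (mem_univ j))
    · by_cases hs0 : s = 0
      · subst hs0
        simp only [if_neg hs, ↓reduceIte, zero_sub, dvd_neg, Int.natCast_dvd_natCast]
        exact (Nat.gcd_dvd_left _ _).trans (univ.gcd_dvd (mem_univ j))
      · simp [hs, hs0]
  · simp [platonicRow]

theorem dvd_mul_gcd_of_sum_smul_platonicRow_eq_smul {k : ℤ} {c : Fin (r + 1) → ℤ}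
    {v : ((i : Fin (r + 1)) × Fin (n i)) ⊕ Fin m → ℤ} (hv : ∑ i, c i • platonicRow l i = k • v)
    (s : Fin (r + 1)) : k ∣ (c s - if s = 0 then ∑ i, c i else 0) * univ.gcd (l s) :=
  Int.dvd_mul_finset_gcd_of_dvd_mul fun j _ =>
    ⟨v (Sum.inl ⟨s, j⟩), by rw [← sum_smul_platonicRow_inl, hv, Pi.smul_apply, smul_eq_mul]⟩


def reducedPlatonicRow (t : Fin (r + 1)) : ((i : Fin (r + 1)) × Fin (n i)) ⊕ Fin m → ℤ :=
  fun x => platonicRow l t x / (Nat.gcd (univ.gcd (l 0)) (univ.gcd (l t)) : ℤ)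

theorem platonicRow_eq_smul_reducedPlatonicRow {t : Fin (r + 1)} (ht : t ≠ 0) :
    platonicRow (m := m) l t =
      (Nat.gcd (univ.gcd (l 0)) (univ.gcd (l t)) : ℤ) • reducedPlatonicRow l t :=
  funext fun x => (Int.mul_ediv_cancel' (gcd_dvd_platonicRow l ht x)).symm

theorem dvd_coeff_of_sum_smul_platonicRow_eq_smul (hr : 2 ≤ r) (hn : ∀ i, 1 ≤ n i)
    (hone : ∀ i : Fin (r + 1), 3 ≤ (i : ℕ) → ∀ j, l i j = 1)
    (hgcd : Nat.gcd (univ.gcd (l 1)) (univ.gcd (l 2)) ∣ univ.gcd (l 0))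
    {k : ℤ} {c : Fin (r + 1) → ℤ} {v : ((i : Fin (r + 1)) × Fin (n i)) ⊕ Fin m → ℤ}
    (hv : ∑ i, c i • platonicRow l i = k • v) :
    k ∣ c 1 * Nat.gcd (univ.gcd (l 0)) (univ.gcd (l 1)) ∧
      k ∣ c 2 * Nat.gcd (univ.gcd (l 0)) (univ.gcd (l 2)) ∧
      ∀ i : Fin (r + 1), 3 ≤ (i : ℕ) → k ∣ c i := by
  have hcoeff := dvd_mul_gcd_of_sum_smul_platonicRow_eq_smul l hv
  have h₁ : k ∣ c 1 * univ.gcd (l 1) := by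
    simpa [Fin.one_ne_zero_of_one_le (by omega : 1 ≤ r)] using hcoeff 1
  have h₂ : k ∣ c 2 * univ.gcd (l 2) := by simpa [Fin.two_ne_zero_of_two_le hr] using hcoeff 2
  have h₃ : ∀ i : Fin (r + 1), 3 ≤ (i : ℕ) → k ∣ c i := fun i hi => by
    have hgcd_one : univ.gcd (l i) = 1 :=
      Nat.dvd_one.mp (hone i hi ⟨0, hn i⟩ ▸ univ.gcd_dvd (mem_univ _))
    have hi0 : i ≠ 0 := by rintro rfl; simp at hi
    simpa [hi0, hgcd_one] using hcoeff i
  have h₀ : k ∣ (c 1 + c 2) * univ.gcd (l 0) := by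
    have h := (dvd_neg.mpr (hcoeff 0)).sub ((Fin.dvd_sum_univ_sub_add_add_of_dvd hr h₃).mul_right
      ((univ.gcd (l 0) : ℕ) : ℤ))
    simp only [if_true] at h
    generalize ((univ.gcd (l 0) : ℕ) : ℤ) = g₀ at h ⊢
    rw [show (c 1 + c 2) * g₀ = -((c 0 - ∑ i, c i) * g₀) - (∑ i, c i - (c 0 + c 1 + c 2)) * g₀ by
      ring]
    exact h
  refine ⟨Int.dvd_mul_gcd_of_dvd_mul (Int.dvd_mul_of_gcd_dvd_of_dvd_add_mul hgcd h₁ h₂ h₀) h₁,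
    Int.dvd_mul_gcd_of_dvd_mul (Int.dvd_mul_of_gcd_dvd_of_dvd_add_mul ?_ h₂ h₁ ?_) h₂, h₃⟩
  · rwa [Nat.gcd_comm]
  · rwa [add_comm]

theorem saturation_span_platonicRow_le (hr : 2 ≤ r) (hn : ∀ i, 1 ≤ n i)
    (hone : ∀ i : Fin (r + 1), 3 ≤ (i : ℕ) → ∀ j, l i j = 1)
    (hgcd : Nat.gcd (univ.gcd (l 1)) (univ.gcd (l 2)) ∣ univ.gcd (l 0)) :
    (span ℤ (platonicRow (m := m) l '' {i | i ≠ 0})).saturation ≤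
      span ℤ ({reducedPlatonicRow l 1, reducedPlatonicRow l 2} ∪
        platonicRow l '' {i | 3 ≤ (i : ℕ)}) := by
  intro v hv
  obtain ⟨k, hk, hkv⟩ := mem_saturation_iff.mp hv
  obtain ⟨c, hc⟩ :=
    (mem_span_range_iff_exists_fun ℤ).mp (span_mono (Set.image_subset_range _ _) hkv)
  obtain ⟨h₁, h₂, h₃⟩ := dvd_coeff_of_sum_smul_platonicRow_eq_smul l hr hn hone hgcd hc
  refine mem_of_smul_mem_pointwise_smul (IsRegular.of_ne_zero (nonZeroDivisors.ne_zero hk)) ?_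
  rw [← hc]
  refine sum_mem fun i _ => ?_
  rcases Fin.eq_zero_or_eq_one_or_eq_two_or_three_le hr i with rfl | rfl | rfl | hi
  · rw [platonicRow_zero, smul_zero]
    exact zero_mem _
  · rw [platonicRow_eq_smul_reducedPlatonicRow l (Fin.one_ne_zero_of_one_le (by omega)), smul_smul]
    exact smul_mem_pointwise_smul_of_dvd h₁ (subset_span (by simp))
  · rw [platonicRow_eq_smul_reducedPlatonicRow l (Fin.two_ne_zero_of_two_le hr), smul_smul]
    exact smul_mem_pointwise_smul_of_dvd h₂ (subset_span (by simp))
  · exact smul_mem_pointwise_smul_of_dvd (h₃ i hi) (subset_span (Or.inr ⟨i, hi, rfl⟩))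

theorem span_le_saturation_span_platonicRow (hr : 2 ≤ r) :
    span ℤ ({reducedPlatonicRow l 1, reducedPlatonicRow l 2} ∪
        platonicRow l '' {i | 3 ≤ (i : ℕ)}) ≤
      (span ℤ (platonicRow (m := m) l '' {i | i ≠ 0})).saturation := by
  have reduced_mem {t : Fin (r + 1)} (ht : t ≠ 0) :
      reducedPlatonicRow l t ∈ (span ℤ (platonicRow (m := m) l '' {i | i ≠ 0})).saturation :=
    ediv_mem_saturation (subset_span (Set.mem_image_of_mem _ ht)) (gcd_dvd_platonicRow l ht)
  rw [span_le]
  rintro _ ((rfl | rfl) | ⟨i, hi, rfl⟩)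
  · exact reduced_mem (Fin.one_ne_zero_of_one_le (by omega))
  · exact reduced_mem (Fin.two_ne_zero_of_two_le hr)
  · have hi0 : i ≠ 0 := by rintro rfl; simp at hi
    exact le_saturation _ (subset_span ⟨i, hi0, rfl⟩)

end PlatonicRow

theorem saturation_of_platonic_row_lattice_general
    (r : ℕ) (hr : 2 ≤ r) (n : Fin (r + 1) → ℕ) (hn : ∀ i, 1 ≤ n i) (m : ℕ)
    (l : (i : Fin (r + 1)) → Fin (n i) → ℕ)
    (hone : ∀ i : Fin (r + 1), 3 ≤ (i : ℕ) → ∀ j, l i j = 1)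
    (g : Fin (r + 1) → ℕ) (hg : ∀ i, g i = Finset.univ.gcd (l i))
    (hgcd : Nat.gcd (g 1) (g 2) = Finset.univ.gcd g)
    (u : Fin (r + 1) → (((i : Fin (r + 1)) × Fin (n i)) ⊕ Fin m) → ℤ)
    (hu : ∀ i, u i = Sum.elim
      (fun x => (if x.1 = i then (l x.1 x.2 : ℤ) else 0) -
        (if x.1 = 0 then (l x.1 x.2 : ℤ) else 0))
      (fun _ => 0))
    (w₁ w₂ : (((i : Fin (r + 1)) × Fin (n i)) ⊕ Fin m) → ℤ)
    (hw₁ : ∀ x, w₁ x = u 1 x / (Nat.gcd (g 0) (g 1) : ℤ))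
    (hw₂ : ∀ x, w₂ x = u 2 x / (Nat.gcd (g 0) (g 2) : ℤ))
    (S : Submodule ℤ ((((i : Fin (r + 1)) × Fin (n i)) ⊕ Fin m) → ℤ))
    (hS : S = Submodule.span ℤ (u '' {i | i ≠ 0})) :
    Submodule.comap S.mkQ
        (Submodule.torsion ℤ
          (((((i : Fin (r + 1)) × Fin (n i)) ⊕ Fin m) → ℤ) ⧸ S))
      = Submodule.span ℤ
          (({w₁, w₂} : Set ((((i : Fin (r + 1)) × Fin (n i)) ⊕ Fin m) → ℤ)) ∪
            u '' {i | 3 ≤ (i : ℕ)}) := by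
  obtain rfl : g = fun i => univ.gcd (l i) := funext hg
  obtain rfl : u = platonicRow l := funext hu
  obtain rfl : w₁ = reducedPlatonicRow l 1 := funext hw₁
  obtain rfl : w₂ = reducedPlatonicRow l 2 := funext hw₂
  have hgcd_dvd : Nat.gcd (univ.gcd (l 1)) (univ.gcd (l 2)) ∣ univ.gcd (l 0) :=
    hgcd ▸ univ.gcd_dvd (mem_univ 0)
  subst hS
  exact le_antisymm (saturation_span_platonicRow_le l hr hn hone hgcd_dvd)
    (span_le_saturation_span_platonicRow l hr)

/-- The paper's Lemma 6.3: for a platonic ring of Type 2 with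
`gcd(𝔩_1, 𝔩_2) = gcd(𝔩_0, …, 𝔩_r)`, the saturation of the row lattice
`⟨u_1, …, u_r⟩ ⊆ ℤ^{n+m}` — i.e. the kernel of
`ℤ^{n+m} → (ℤ^{n+m}/⟨u_1, …, u_r⟩)/torsion` — is generated by
`w_1 = u_1/gcd(𝔩_0,𝔩_1)`, `w_2 = u_2/gcd(𝔩_0,𝔩_2)` and `u_3, …, u_r`. -/
theorem saturation_of_platonic_row_lattice
    (r : ℕ) (hr : 2 ≤ r) (n : Fin (r + 1) → ℕ) (hn : ∀ i, 1 ≤ n i) (m : ℕ)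
    (l : (i : Fin (r + 1)) → Fin (n i) → ℕ) (hl : ∀ i j, 0 < l i j)
    (hplat : ∀ j : (i : Fin (r + 1)) → Fin (n i),
      IsPlatonicTuple fun i => l i (j i))
    (hone : ∀ i : Fin (r + 1), 3 ≤ (i : ℕ) → ∀ j, l i j = 1)
    (g : Fin (r + 1) → ℕ) (hg : ∀ i, g i = Finset.univ.gcd (l i))
    (hgcd : Nat.gcd (g 1) (g 2) = Finset.univ.gcd g)
    (u : Fin (r + 1) → (((i : Fin (r + 1)) × Fin (n i)) ⊕ Fin m) → ℤ)
    (hu : ∀ i, u i = Sum.elim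
      (fun x => (if x.1 = i then (l x.1 x.2 : ℤ) else 0) -
        (if x.1 = 0 then (l x.1 x.2 : ℤ) else 0))
      (fun _ => 0))
    (w₁ w₂ : (((i : Fin (r + 1)) × Fin (n i)) ⊕ Fin m) → ℤ)
    (hw₁ : ∀ x, w₁ x = u 1 x / (Nat.gcd (g 0) (g 1) : ℤ))
    (hw₂ : ∀ x, w₂ x = u 2 x / (Nat.gcd (g 0) (g 2) : ℤ))
    (S : Submodule ℤ ((((i : Fin (r + 1)) × Fin (n i)) ⊕ Fin m) → ℤ))
    (hS : S = Submodule.span ℤ (u '' {i | i ≠ 0})) :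
    Submodule.comap S.mkQ
        (Submodule.torsion ℤ
          (((((i : Fin (r + 1)) × Fin (n i)) ⊕ Fin m) → ℤ) ⧸ S))
      = Submodule.span ℤ
          (({w₁, w₂} : Set ((((i : Fin (r + 1)) × Fin (n i)) ⊕ Fin m) → ℤ)) ∪
            u '' {i | 3 ≤ (i : ℕ)}) :=
  saturation_of_platonic_row_lattice_general r hr n hn m l hone g hg hgcd u hu w₁ w₂ hw₁ hw₂ S hS
end

section
/- Let a, b, c be positive integers and set g = gcd(a, b, c). Then gcd(ab, ac, bc) = g² · gcd(a/g, b/g) · gcd(a/g, c/g) · gcd(b/g, c/g). -/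
/-- With `g = gcd(a, b, c)`, one has
`gcd(ab, ac, bc) = g²·gcd(a/g, b/g)·gcd(a/g, c/g)·gcd(b/g, c/g)`. -/
theorem gcd_pairwise_products_formula (a b c : ℕ)
    (ha : 0 < a) (hb : 0 < b) (hc : 0 < c)
    (g : ℕ) (hg : g = Nat.gcd a (Nat.gcd b c)) :
    Nat.gcd (a * b) (Nat.gcd (a * c) (b * c))
      = g ^ 2 * Nat.gcd (a / g) (b / g) * Nat.gcd (a / g) (c / g)
          * Nat.gcd (b / g) (c / g) := by
  have hg0 : 0 < g := by
    rw [hg]; exact Nat.gcd_pos_of_pos_left _ ha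
  have hga : g ∣ a := hg ▸ Nat.gcd_dvd_left _ _
  have hgb : g ∣ b := hg ▸ (Nat.gcd_dvd_right _ _).trans (Nat.gcd_dvd_left _ _)
  have hgc : g ∣ c := hg ▸ (Nat.gcd_dvd_right _ _).trans (Nat.gcd_dvd_right _ _)
  have hag : 0 < a / g := Nat.div_pos (Nat.le_of_dvd ha hga) hg0
  have hbg : 0 < b / g := Nat.div_pos (Nat.le_of_dvd hb hgb) hg0
  have hcg : 0 < c / g := Nat.div_pos (Nat.le_of_dvd hc hgc) hg0
  have g1 := Nat.gcd_pos_of_pos_left (b / g) hag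
  have g2 := Nat.gcd_pos_of_pos_left (c / g) hag
  have g3 := Nat.gcd_pos_of_pos_left (c / g) hbg
  have hL : Nat.gcd (a * b) (Nat.gcd (a * c) (b * c)) ≠ 0 :=
    (Nat.gcd_pos_of_pos_left _ (Nat.mul_pos ha hb)).ne'
  have hR : g ^ 2 * Nat.gcd (a / g) (b / g) * Nat.gcd (a / g) (c / g)
      * Nat.gcd (b / g) (c / g) ≠ 0 := by positivity
  refine Nat.eq_of_factorization_eq hL hR fun p => ?_
  have hab : (a * b) ≠ 0 := by positivity
  have hac : (a * c) ≠ 0 := by positivity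
  have hbc : (b * c) ≠ 0 := by positivity
  rw [Nat.factorization_gcd hab (Nat.gcd_ne_zero_left hac),
      Nat.factorization_gcd hac hbc,
      Nat.factorization_mul ha.ne' hb.ne', Nat.factorization_mul ha.ne' hc.ne',
      Nat.factorization_mul hb.ne' hc.ne']
  rw [Nat.factorization_mul (by positivity) g3.ne',
      Nat.factorization_mul (by positivity) g2.ne',
      Nat.factorization_mul (by positivity) g1.ne',
      Nat.factorization_pow,
      Nat.factorization_gcd hag.ne' hbg.ne',
      Nat.factorization_gcd hag.ne' hcg.ne',
      Nat.factorization_gcd hbg.ne' hcg.ne',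
      Nat.factorization_div hga, Nat.factorization_div hgb,
      Nat.factorization_div hgc]
  simp only [Finsupp.inf_apply, Finsupp.add_apply, Finsupp.smul_apply,
    Finsupp.tsub_apply, smul_eq_mul]
  have hgp : g.factorization p
      = min (a.factorization p) (min (b.factorization p) (c.factorization p)) := by
    rw [hg, Nat.factorization_gcd ha.ne' (Nat.gcd_ne_zero_left hb.ne'),
        Nat.factorization_gcd hb.ne' hc.ne']
    simp [Finsupp.inf_apply]
  rw [hgp]
  have h1 : g.factorization p ≤ a.factorization p := hgp ▸ min_le_left _ _
  omega
end
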